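/- arXiv:math/0512087 — 3 statements merged into one kernel-verified Lean document; each statement's English description precedes it below -/
import Mathlib

section
/- Let Y be a connected, locally finite simple graph with vertex set V, let H be a group acting freely on V by automorphisms of Y, and let K ≤ H be a subgroup. Suppose the number of filtered ends e(Y,H) equals e with e finite and nonzero. Then there exist sequences of finite subsets C̃ₙ ⊆ V and Ĉₙ ⊆ V (n ∈ ℕ) such that: (i) K•C̃ₙ ⊆ K•C̃ₙ₊₁ for all n and ⋃ₙ K•C̃ₙ = V; (ii) for every n, the subgraph induced on V ∖ H•C̃ₙ has exactly e connected components, each of which is H-unbounded; (iii) C̃ₙ ⊆ Ĉₙ, Ĉₙ ∩ (H•C̃ₙ) = C̃ₙ, Ĉₙ ⊆ (H•C̃ₙ) ∪ N(H•C̃ₙ), and the subgraph induced on Ĉₙ ∪ (V ∖ H•C̃ₙ) is connected. -/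
open SimpleGraph

/-- The saturation `K • S` of a set `S` of vertices under the action of a subgroup `K`. -/
def Subgroup.satSet {H : Type*} [Group H] (K : Subgroup H) {V : Type*} [MulAction H V]
    (S : Set V) : Set V :=
  {v | ∃ g ∈ K, ∃ s ∈ S, g • s = v}

theorem Subgroup.satSet_mono {H : Type*} [Group H] (K : Subgroup H) {V : Type*}
    [MulAction H V] {S S' : Set V} (h : S ⊆ S') : K.satSet S ⊆ K.satSet S' := by
  rintro v ⟨g, hg, s, hs, rfl⟩
  exact ⟨g, hg, s, h hs, rfl⟩

/-- A set of vertices is `K`-bounded if it is contained in the saturation of a finite set. -/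
def Subgroup.bddSet {H : Type*} [Group H] (K : Subgroup H) {V : Type*} [MulAction H V]
    (A : Set V) : Prop :=
  ∃ T : Finset V, A ⊆ K.satSet ↑T

/-- The inclusion of one induced subgraph into a larger one, as a graph homomorphism. -/
def SimpleGraph.inclHom {V : Type*} (Y : SimpleGraph V) {W W' : Set V} (h : W ⊆ W') :
    Y.induce W →g Y.induce W' where
  toFun v := ⟨v.1, h v.2⟩
  map_rel' := fun hab => hab

/-- The set of filtered ends of a graph `Y` with respect to a subgroup `K` of a group acting
on the vertices: the inverse limit, over finite sets `S` of vertices directed by inclusion, of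
the sets of connected components of the subgraph induced on the complement of `K • S`. -/
def filteredEnds {V H : Type*} [Group H] [MulAction H V] (Y : SimpleGraph V)
    (K : Subgroup H) : Type _ :=
  { f : ∀ S : Finset V, (Y.induce ((K.satSet (S : Set V))ᶜ)).ConnectedComponent //
      ∀ ⦃S S' : Finset V⦄ (h : S ⊆ S'),
        (f S').map (Y.inclHom (Set.compl_subset_compl.mpr
          (K.satSet_mono (Finset.coe_subset.mpr h)))) = f S }

/-- The set of vertices adjacent to some vertex of `W`. -/
def SimpleGraph.nbhd {V : Type*} (Y : SimpleGraph V) (W : Set V) : Set V :=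
  {v | ∃ w ∈ W, Y.Adj v w}

/-- The Cayley graph of a group with respect to a finite set `S₀`. -/
def cayleyGraph (G : Type*) [Group G] (S₀ : Finset G) : SimpleGraph G where
  Adj x y := x ≠ y ∧ (x⁻¹ * y ∈ S₀ ∨ y⁻¹ * x ∈ S₀)
  symm := by
    constructor
    rintro x y ⟨hne, h⟩
    exact ⟨hne.symm, h.symm⟩
  loopless := ⟨fun x h => h.1 rfl⟩

namespace Stmt11

variable {V H : Type} [Group H] [MulAction H V] {Y : SimpleGraph V}

abbrev sat (H : Type) [Group H] {V : Type} [MulAction H V] (S : Set V) : Set V :=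
  (⊤ : Subgroup H).satSet S

theorem mem_sat {S : Set V} {v : V} : v ∈ sat H S ↔ ∃ g : H, ∃ s ∈ S, g • s = v := by
  constructor
  · rintro ⟨g, -, s, hs, rfl⟩; exact ⟨g, s, hs, rfl⟩
  · rintro ⟨g, s, hs, rfl⟩; exact ⟨g, trivial, s, hs, rfl⟩

theorem subset_satK (K : Subgroup H) (S : Set V) : S ⊆ K.satSet S :=
  fun s hs => ⟨1, K.one_mem, s, hs, one_smul _ _⟩

theorem subset_sat (S : Set V) : S ⊆ sat H S := subset_satK ⊤ S

theorem smul_mem_sat {S : Set V} {v : V} (g : H) (hv : v ∈ sat H S) :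
    g • v ∈ sat H S := by
  obtain ⟨g', s, hs, rfl⟩ := mem_sat.mp hv
  exact mem_sat.mpr ⟨g * g', s, hs, (mul_smul _ _ _)⟩

theorem smul_mem_sat_iff {S : Set V} {v : V} (g : H) :
    g • v ∈ sat H S ↔ v ∈ sat H S := by
  constructor
  · intro h
    have := smul_mem_sat (g⁻¹) h
    rwa [inv_smul_smul] at this
  · exact smul_mem_sat g

theorem sat_union (S T : Set V) : sat H (S ∪ T) = sat H S ∪ sat H T := by
  ext v
  simp only [Set.mem_union, mem_sat]
  constructor
  · rintro ⟨g, s, hs | hs, rfl⟩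
    · exact Or.inl ⟨g, s, hs, rfl⟩
    · exact Or.inr ⟨g, s, hs, rfl⟩
  · rintro (⟨g, s, hs, rfl⟩ | ⟨g, s, hs, rfl⟩)
    · exact ⟨g, s, Or.inl hs, rfl⟩
    · exact ⟨g, s, Or.inr hs, rfl⟩

theorem sat_subset_of_invariant {C A : Set V} (hCA : C ⊆ A)
    (hA : ∀ (g : H) (v : V), v ∈ A → g • v ∈ A) : sat H C ⊆ A := by
  rintro v hv
  obtain ⟨g, s, hs, rfl⟩ := mem_sat.mp hv
  exact hA g s (hCA hs)

/-- Bounded sets (w.r.t. the full group). -/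
abbrev bdd (H : Type) [Group H] {V : Type} [MulAction H V] (A : Set V) : Prop :=
  (⊤ : Subgroup H).bddSet A

theorem bdd_mono {A B : Set V} (h : A ⊆ B) (hB : bdd H B) : bdd H A := by
  obtain ⟨T, hT⟩ := hB; exact ⟨T, h.trans hT⟩

theorem bdd_union {A B : Set V} (hA : bdd H A) (hB : bdd H B) : bdd H (A ∪ B) := by
  classical
  obtain ⟨T, hT⟩ := hA; obtain ⟨T', hT'⟩ := hB
  refine ⟨T ∪ T', ?_⟩
  rw [Finset.coe_union]
  rintro v (hv | hv)
  · exact Subgroup.satSet_mono _ Set.subset_union_left (hT hv)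
  · exact Subgroup.satSet_mono _ Set.subset_union_right (hT' hv)

theorem bdd_of_finite {A : Set V} (hA : A.Finite) : bdd H A :=
  ⟨hA.toFinset, by simpa using subset_sat A⟩

theorem bdd_smul {A : Set V} (g : H) (hA : bdd H A) : bdd H ((g • ·) '' A) := by
  obtain ⟨T, hT⟩ := hA
  refine ⟨T, ?_⟩
  rintro v ⟨a, ha, rfl⟩
  exact smul_mem_sat g (hT ha)


/-! ### Connected component infrastructure -/

section Comps

variable (Y)

/-- Support of a component of an induced subgraph, as a set of vertices of `Y`. -/
def cs {Z : Set V} (c : (Y.induce Z).ConnectedComponent) : Set V :=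
  Subtype.val '' c.supp

variable {Y}

theorem mem_cs {Z : Set V} {c : (Y.induce Z).ConnectedComponent} {v : V} :
    v ∈ cs Y c ↔ ∃ h : v ∈ Z, (Y.induce Z).connectedComponentMk ⟨v, h⟩ = c := by
  constructor
  · rintro ⟨⟨w, hw⟩, hmem, rfl⟩
    exact ⟨hw, hmem⟩
  · rintro ⟨h, hc⟩
    exact ⟨⟨v, h⟩, hc, rfl⟩

theorem cs_nonempty {Z : Set V} (c : (Y.induce Z).ConnectedComponent) : (cs Y c).Nonempty := by
  obtain ⟨v, hv⟩ := c.exists_rep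
  exact ⟨v.1, mem_cs.mpr ⟨v.2, hv⟩⟩

theorem cs_subset {Z : Set V} (c : (Y.induce Z).ConnectedComponent) : cs Y c ⊆ Z := by
  rintro v hv
  exact (mem_cs.mp hv).1

theorem cs_eq_of_mem {Z : Set V} {c c' : (Y.induce Z).ConnectedComponent} {v : V}
    (h : v ∈ cs Y c) (h' : v ∈ cs Y c') : c = c' := by
  obtain ⟨hz, hc⟩ := mem_cs.mp h
  obtain ⟨hz', hc'⟩ := mem_cs.mp h'
  rw [← hc, ← hc']

variable (Y)

/-- The inclusion of an induced subgraph into the ambient graph. -/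
def inclY (Z : Set V) : Y.induce Z →g Y := ⟨Subtype.val, fun {x y} hxy => hxy⟩

@[simp] theorem inclY_apply {Z : Set V} (v : Z) : inclY Y Z v = v.1 := rfl

/-- The map on components induced by an inclusion of induced subgraphs. -/
def cmap {Z' Z : Set V} (h : Z' ⊆ Z) :
    (Y.induce Z').ConnectedComponent → (Y.induce Z).ConnectedComponent :=
  ConnectedComponent.map (Y.inclHom h)

variable {Y}

theorem cmap_mk {Z' Z : Set V} (h : Z' ⊆ Z) (v : Z') :
    cmap Y h ((Y.induce Z').connectedComponentMk v)
      = (Y.induce Z).connectedComponentMk ⟨v.1, h v.2⟩ := rfl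

theorem cmap_comp {Z'' Z' Z : Set V} (h' : Z'' ⊆ Z') (h : Z' ⊆ Z)
    (c : (Y.induce Z'').ConnectedComponent) :
    cmap Y h (cmap Y h' c) = cmap Y (h'.trans h) c := by
  refine c.ind fun v => rfl

theorem cmap_id {Z : Set V} (c : (Y.induce Z).ConnectedComponent) :
    cmap Y (le_refl Z) c = c := by
  refine c.ind fun v => rfl

theorem cs_cmap {Z' Z : Set V} (h : Z' ⊆ Z) (c : (Y.induce Z').ConnectedComponent) :
    cs Y c ⊆ cs Y (cmap Y h c) := by
  rintro v hv
  obtain ⟨hz, hc⟩ := mem_cs.mp hv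
  refine mem_cs.mpr ⟨h hz, ?_⟩
  rw [← hc, cmap_mk]

/-- A walk in `Y` whose support lies in `Z` gives reachability in the induced graph. -/
theorem reachable_induce_of_walk {Z : Set V} {a b : V} (w : Y.Walk a b)
    (hw : ∀ x ∈ w.support, x ∈ Z) :
    (Y.induce Z).Reachable ⟨a, hw a w.start_mem_support⟩ ⟨b, hw b w.end_mem_support⟩ := by
  induction w with
  | nil => rfl
  | @cons u x b hadj p ih =>
    have hx : x ∈ Z := hw x (by simp)
    have h2 : ∀ y ∈ p.support, y ∈ Z := fun y hy => hw y (by simp [hy])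
    have hr := ih h2
    exact (SimpleGraph.Adj.reachable (by exact hadj :
      (Y.induce Z).Adj ⟨u, hw u (by simp)⟩ ⟨x, hx⟩)).trans hr

/-- Reachability in an induced subgraph yields a walk in `Y` whose support stays in the
support of the component. -/
theorem exists_walk_in_cs {Z : Set V} {c : (Y.induce Z).ConnectedComponent} {a b : V}
    (ha : a ∈ cs Y c) (hb : b ∈ cs Y c) :
    ∃ w : Y.Walk a b, ∀ x ∈ w.support, x ∈ cs Y c := by
  obtain ⟨hza, hca⟩ := mem_cs.mp ha
  obtain ⟨hzb, hcb⟩ := mem_cs.mp hb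
  have hreach : (Y.induce Z).Reachable ⟨a, hza⟩ ⟨b, hzb⟩ := by
    refine ConnectedComponent.exact ?_
    rw [hca, hcb]
  classical
  obtain ⟨p⟩ := hreach
  refine ⟨(p.map (inclY Y Z) : Y.Walk a b), ?_⟩
  intro x hx
  replace hx : x ∈ (p.map (inclY Y Z)).support := hx
  rw [Walk.support_map] at hx
  obtain ⟨⟨x, hxz⟩, hxs, rfl⟩ := List.mem_map.mp hx
  refine mem_cs.mpr ⟨hxz, ?_⟩
  have : (Y.induce Z).Reachable ⟨x, hxz⟩ ⟨b, hzb⟩ := by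
    exact ((SimpleGraph.Walk.takeUntil p ⟨x,hxz⟩ hxs).reverse.reachable).trans p.reachable
  rw [← hcb]
  exact ConnectedComponent.sound this

end Comps

/-! ### Group action on components -/

section Action

variable (Y)

/-- Invariance of a set of vertices. -/
def inv (H : Type) [Group H] {V : Type} [MulAction H V] (Z : Set V) : Prop :=
  ∀ (g : H) (v : V), v ∈ Z → g • v ∈ Z

variable {Y}

theorem inv_satc (S : Set V) : inv H ((sat H S)ᶜ : Set V) := by
  intro g v hv hmem
  exact hv ((smul_mem_sat_iff g).mp hmem)

theorem inv_sat (S : Set V) : inv H (sat H S) := fun g v hv => smul_mem_sat g hv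

variable (Y) in
/-- The graph homomorphism given by the action of `g` on an invariant set. -/
def actHom (haut : ∀ (g : H) (u v : V), Y.Adj (g • u) (g • v) ↔ Y.Adj u v)
    {Z : Set V} (hZ : inv H Z) (g : H) : Y.induce Z →g Y.induce Z where
  toFun v := ⟨g • v.1, hZ g v.1 v.2⟩
  map_rel' := fun {a b} hab => by
    show Y.Adj (g • a.1) (g • b.1)
    exact (haut g a.1 b.1).mpr hab

section act
variable (haut : ∀ (g : H) (u v : V), Y.Adj (g • u) (g • v) ↔ Y.Adj u v)
    {Z : Set V} (hZ : inv H Z)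

/-- Action of `g` on components of an invariant induced subgraph. -/
def cact (g : H) (c : (Y.induce Z).ConnectedComponent) : (Y.induce Z).ConnectedComponent :=
  c.map (actHom Y haut hZ g)

theorem cact_mk (g : H) (v : Z) :
    cact haut hZ g ((Y.induce Z).connectedComponentMk v)
      = (Y.induce Z).connectedComponentMk ⟨g • v.1, hZ g v.1 v.2⟩ := rfl

theorem cact_cact (g g' : H) (c : (Y.induce Z).ConnectedComponent) :
    cact haut hZ g (cact haut hZ g' c) = cact haut hZ (g * g') c := by
  refine c.ind fun v => ?_
  rw [cact_mk, cact_mk, cact_mk]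
  exact congrArg _ (Subtype.ext (mul_smul g g' v.1).symm)

theorem cact_one (c : (Y.induce Z).ConnectedComponent) : cact haut hZ 1 c = c := by
  refine c.ind fun v => ?_
  rw [cact_mk]
  exact congrArg _ (Subtype.ext (one_smul H v.1))

theorem cact_inv_cact (g : H) (c : (Y.induce Z).ConnectedComponent) :
    cact haut hZ g⁻¹ (cact haut hZ g c) = c := by
  rw [cact_cact, inv_mul_cancel, cact_one]

theorem smul_mem_cs_cact {g : H} {v : V} {c : (Y.induce Z).ConnectedComponent}
    (hv : v ∈ cs Y c) : g • v ∈ cs Y (cact haut hZ g c) := by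
  obtain ⟨hz, hc⟩ := mem_cs.mp hv
  refine mem_cs.mpr ⟨hZ g v hz, ?_⟩
  rw [← hc, cact_mk]

theorem mem_cs_cact_iff {g : H} {v : V} {c : (Y.induce Z).ConnectedComponent} :
    g • v ∈ cs Y (cact haut hZ g c) ↔ v ∈ cs Y c := by
  constructor
  · intro h
    have := smul_mem_cs_cact haut hZ (g := g⁻¹) h
    rwa [inv_smul_smul, cact_inv_cact] at this
  · exact smul_mem_cs_cact haut hZ

theorem bdd_cs_cact {g : H} {c : (Y.induce Z).ConnectedComponent}
    (hb : bdd H (cs Y c)) : bdd H (cs Y (cact haut hZ g c)) := by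
  obtain ⟨T, hT⟩ := hb
  refine ⟨T, fun v hv => ?_⟩
  have : g⁻¹ • v ∈ cs Y c := by
    rw [← mem_cs_cact_iff haut hZ (g := g), smul_inv_smul]
    exact hv
  have := smul_mem_sat g (hT this)
  rwa [smul_inv_smul] at this

theorem cmap_cact {Z' : Set V} (hZ' : inv H Z') (hsub : Z' ⊆ Z) (g : H)
    (c : (Y.induce Z').ConnectedComponent) :
    cmap Y hsub (cact haut hZ' g c) = cact haut hZ g (cmap Y hsub c) := by
  refine c.ind fun v => rfl

end act

end Action

/-! ### Crossing lemma and orbit structure -/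

section Orbits

variable (haut : ∀ (g : H) (u v : V), Y.Adj (g • u) (g • v) ↔ Y.Adj u v)

theorem crossing {Z : Set V} {a b : V} (w : Y.Walk a b) (ha : a ∈ Z) (hb : b ∉ Z) :
    ∃ (u : V) (hu : u ∈ Z) (v : V), Y.Adj u v ∧ v ∉ Z ∧
      (Y.induce Z).Reachable ⟨a, ha⟩ ⟨u, hu⟩ := by
  induction w with
  | nil => exact absurd ha hb
  | @cons a x b hadj p ih =>
    by_cases hx : x ∈ Z
    · obtain ⟨u, hu, v, hv1, hv2, hv3⟩ := ih hx hb
      refine ⟨u, hu, v, hv1, hv2, ?_⟩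
      exact (SimpleGraph.Adj.reachable (by exact hadj :
        (Y.induce Z).Adj ⟨a, ha⟩ ⟨x, hx⟩)).trans hv3
    · exact ⟨a, ha, x, hadj, hx, Reachable.refl _⟩

/-- Every component of the complement of a saturation is a translate of one of finitely
many components. -/
theorem exists_reps (hconn : Y.Connected) (hlf : ∀ v : V, (Y.neighborSet v).Finite)
    {S : Set V} (hS : S.Finite) (hSne : S.Nonempty) :
    ∃ Reps : Set ((Y.induce ((sat H S)ᶜ)).ConnectedComponent), Reps.Finite ∧
      ∀ c : (Y.induce ((sat H S)ᶜ)).ConnectedComponent,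
        ∃ (g : H) (r : (Y.induce ((sat H S)ᶜ)).ConnectedComponent),
          r ∈ Reps ∧ c = cact haut (inv_satc S) g r := by
  classical
  set Z : Set V := (sat H S)ᶜ with hZdef
  have hZ : inv H Z := inv_satc S
  set N : Set V := {v | v ∈ Z ∧ ∃ s ∈ S, Y.Adj v s} with hNdef
  have hNfin : N.Finite := by
    have : N ⊆ ⋃ s ∈ S, Y.neighborSet s := by
      rintro v ⟨hvZ, s, hs, hadj⟩
      exact Set.mem_biUnion hs hadj.symm
    exact Set.Finite.subset (Set.Finite.biUnion hS fun s _ => hlf s) this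
  have : Finite ↑N := hNfin.to_subtype
  set Reps : Set ((Y.induce Z).ConnectedComponent) :=
    Set.range (fun v : ↑N => (Y.induce Z).connectedComponentMk ⟨v.1, v.2.1⟩) with hRdef
  refine ⟨Reps, Set.finite_range _, ?_⟩
  intro c
  obtain ⟨x, hx⟩ := c.exists_rep
  obtain ⟨s₀, hs₀⟩ := hSne
  have hs₀' : s₀ ∉ Z := fun h => h (subset_sat S hs₀)
  obtain ⟨w⟩ := hconn.preconnected x.1 s₀
  obtain ⟨u, hu, v, hadj, hv, hreach⟩ := crossing w x.2 hs₀'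
  have hvsat : v ∈ sat H S := not_not.mp hv
  obtain ⟨g, s, hs, hgs⟩ := mem_sat.mp hvsat
  have hucs : u ∈ cs Y c := by
    refine mem_cs.mpr ⟨hu, ?_⟩
    rw [← hx]
    exact (ConnectedComponent.sound hreach.symm)
  have hgu : g⁻¹ • u ∈ cs Y (cact haut hZ g⁻¹ c) := smul_mem_cs_cact haut hZ hucs
  have hguN : g⁻¹ • u ∈ N := by
    refine ⟨hZ g⁻¹ u hu, s, hs, ?_⟩
    have := (haut g⁻¹ u v).mpr hadj
    rwa [← hgs, inv_smul_smul] at this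
  refine ⟨g, cact haut hZ g⁻¹ c, ?_, ?_⟩
  · refine ⟨⟨g⁻¹ • u, hguN⟩, ?_⟩
    exact (mem_cs.mp hgu).2
  · rw [cact_cact, mul_inv_cancel, cact_one]

variable (Y) in
/-- The union of all bounded components of the complement of the saturation of `S`. -/
def BSet (H : Type) [Group H] {V : Type} [MulAction H V] (Y : SimpleGraph V) (S : Set V) :
    Set V :=
  {v | ∃ c : (Y.induce ((sat H S)ᶜ)).ConnectedComponent, bdd H (cs Y c) ∧ v ∈ cs Y c}

theorem BSet_inv (haut : ∀ (g : H) (u v : V), Y.Adj (g • u) (g • v) ↔ Y.Adj u v) {S : Set V} : inv H (BSet H Y S) := by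
  rintro g v ⟨c, hc, hv⟩
  exact ⟨cact haut (inv_satc S) g c, bdd_cs_cact haut _ hc,
    smul_mem_cs_cact haut _ hv⟩

theorem mem_BSet_of_bdd {S : Set V} {c : (Y.induce ((sat H S)ᶜ)).ConnectedComponent}
    (hc : bdd H (cs Y c)) {v : V} (hv : v ∈ cs Y c) : v ∈ BSet H Y S := ⟨c, hc, hv⟩

/-- The union of the bounded components is bounded, and is itself a saturation of a finite
set of its elements. -/
theorem BSet_structure (haut : ∀ (g : H) (u v : V), Y.Adj (g • u) (g • v) ↔ Y.Adj u v) (hconn : Y.Connected) (hlf : ∀ v : V, (Y.neighborSet v).Finite)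
    {S : Set V} (hS : S.Finite) (hSne : S.Nonempty) :
    ∃ R : Finset V, (↑R : Set V) ⊆ BSet H Y S ∧ sat H ↑R = BSet H Y S ∧
      bdd H (BSet H Y S) := by
  classical
  obtain ⟨Reps, hRfin, hRall⟩ := exists_reps haut hconn hlf hS hSne
  -- choose a bound for each bounded representative
  have hbnd : ∀ r : (Y.induce ((sat H S)ᶜ)).ConnectedComponent, ∃ T : Finset V,
      bdd H (cs Y r) → cs Y r ⊆ sat H ↑T := by
    intro r
    by_cases h : bdd H (cs Y r)
    · obtain ⟨T, hT⟩ := h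
      exact ⟨T, fun _ => hT⟩
    · exact ⟨∅, fun hh => absurd hh h⟩
  choose T hT using hbnd
  have hbddB : bdd H (BSet H Y S) := by
    have hTBfin : (⋃ r ∈ Reps, (↑(T r) : Set V)).Finite :=
      Set.Finite.biUnion hRfin fun r _ => (T r).finite_toSet
    refine ⟨hTBfin.toFinset, ?_⟩
    rintro v ⟨c, hc, hv⟩
    obtain ⟨g, r, hr, rfl⟩ := hRall c
    have hrb : bdd H (cs Y r) := by
      have := bdd_cs_cact haut (inv_satc S) (g := g⁻¹) hc
      rwa [cact_inv_cact] at this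
    have hg'v : g⁻¹ • v ∈ cs Y r := by
      have hv' : g • (g⁻¹ • v) ∈ cs Y (cact haut (inv_satc S) g r) := by rwa [smul_inv_smul]
      exact (mem_cs_cact_iff haut (inv_satc S)).mp hv'
    have : g⁻¹ • v ∈ sat H ↑(T r) := hT r hrb hg'v
    have h2 : v ∈ sat H ↑(T r) := by
      have := smul_mem_sat g this
      rwa [smul_inv_smul] at this
    refine Subgroup.satSet_mono _ ?_ h2
    intro x hx
    rw [Set.Finite.coe_toFinset]
    exact Set.mem_biUnion hr hx
  obtain ⟨TB, hTB⟩ := hbddB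
  set R : Finset V := TB.filter (fun t => t ∈ BSet H Y S) with hRdef
  have hRsub : (↑R : Set V) ⊆ BSet H Y S := by
    intro t ht
    simp only [hRdef, Finset.coe_filter, Set.mem_setOf_eq] at ht
    exact ht.2
  refine ⟨R, hRsub, ?_, ⟨TB, hTB⟩⟩
  apply Set.Subset.antisymm
  · exact sat_subset_of_invariant hRsub (BSet_inv haut)
  · intro b hb
    obtain ⟨g, t, ht, hgt⟩ := mem_sat.mp (hTB hb)
    have htB : t ∈ BSet H Y S := by
      have : g⁻¹ • b ∈ BSet H Y S := BSet_inv haut g⁻¹ b hb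
      rwa [← hgt, inv_smul_smul] at this
    refine mem_sat.mpr ⟨g, t, ?_, hgt⟩
    simp only [hRdef, Finset.coe_filter, Set.mem_setOf_eq]
    exact ⟨ht, htB⟩

end Orbits

/-! ### Exhaustion of a connected locally finite graph -/

section Exhaustion

theorem exists_exhaustion (hconn : Y.Connected) (hlf : ∀ v : V, (Y.neighborSet v).Finite) :
    ∃ D : ℕ → Finset V, (∀ n m, n ≤ m → D n ⊆ D m) ∧ (∀ v : V, ∃ n, v ∈ D n) := by
  classical
  have hVne : Nonempty V := hconn.nonempty
  obtain ⟨v₀⟩ := hVne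
  let S : ℕ → Set V := fun n => Nat.rec {v₀} (fun _ Sn => Sn ∪ {w | ∃ u ∈ Sn, Y.Adj u w}) n
  have hstep : ∀ n, S (n+1) = S n ∪ {w | ∃ u ∈ S n, Y.Adj u w} := fun n => rfl
  have hfin : ∀ n, (S n).Finite := by
    intro n
    induction n with
    | zero => exact Set.finite_singleton v₀
    | succ n ih =>
      rw [hstep]
      refine ih.union (Set.Finite.subset (Set.Finite.biUnion ih fun u _ => hlf u) ?_)
      rintro w ⟨u, hu, hadj⟩
      exact Set.mem_biUnion hu hadj
  have hmono : ∀ n m, n ≤ m → S n ⊆ S m := by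
    intro n m hnm
    induction hnm with
    | refl => exact le_refl _
    | step _ ih => exact ih.trans (by rw [hstep]; exact Set.subset_union_left)
  have hwalk : ∀ {u v : V} (w : Y.Walk u v) (n : ℕ), u ∈ S n → v ∈ S (n + w.length) := by
    intro u v w
    induction w with
    | nil => intro n hu; simpa using hu
    | @cons a x b hadj p ih =>
      intro n hu
      have hx : x ∈ S (n+1) := by
        rw [hstep]
        exact Or.inr ⟨a, hu, hadj⟩
      have := ih (n+1) hx
      convert this using 2
      rw [Walk.length_cons]
      omega
  refine ⟨fun n => (hfin n).toFinset, ?_, ?_⟩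
  · intro n m hnm x hx
    simp only [Set.Finite.mem_toFinset] at hx ⊢
    exact hmono n m hnm hx
  · intro v
    obtain ⟨w⟩ := hconn.preconnected v₀ v
    refine ⟨w.length, ?_⟩
    simp only [Set.Finite.mem_toFinset]
    have := hwalk w 0 (Set.mem_singleton v₀)
    rwa [zero_add] at this

theorem exhaustion_cofinal {D : ℕ → Finset V} (hmono : ∀ n m, n ≤ m → D n ⊆ D m)
    (hcov : ∀ v : V, ∃ n, v ∈ D n) (T : Finset V) : ∃ n, T ⊆ D n := by
  classical
  induction T using Finset.induction with
  | empty => exact ⟨0, Finset.empty_subset _⟩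
  | @insert a T ha ih =>
    obtain ⟨n, hn⟩ := ih
    obtain ⟨m, hm⟩ := hcov a
    refine ⟨max n m, ?_⟩
    intro x hx
    rcases Finset.mem_insert.mp hx with rfl | hx
    · exact hmono m _ (le_max_right n m) hm
    · exact hmono n _ (le_max_left n m) (hn hx)

end Exhaustion

/-! ### Threads -/

section Threads

variable (haut : ∀ (g : H) (u v : V), Y.Adj (g • u) (g • v) ↔ Y.Adj u v)

theorem satc_antitone {S S' : Finset V} (h : S ⊆ S') :
    ((sat H (↑S' : Set V))ᶜ : Set V) ⊆ (sat H (↑S : Set V))ᶜ :=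
  Set.compl_subset_compl.mpr (Subgroup.satSet_mono _ (Finset.coe_subset.mpr h))

theorem thread_compat (f : filteredEnds Y (⊤ : Subgroup H)) {S S' : Finset V} (h : S ⊆ S') :
    cmap Y (satc_antitone h) (f.1 S') = f.1 S :=
  f.2 h

theorem thread_cs_subset (f : filteredEnds Y (⊤ : Subgroup H)) {S S' : Finset V} (h : S ⊆ S') :
    cs Y (f.1 S') ⊆ cs Y (f.1 S) := by
  have := cs_cmap (satc_antitone h) (f.1 S')
  rwa [thread_compat f h] at this

theorem thread_unbounded (f : filteredEnds Y (⊤ : Subgroup H)) (T : Finset V) :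
    ¬ bdd H (cs Y (f.1 T)) := by
  classical
  rintro ⟨T', hT'⟩
  have h1 : cs Y (f.1 (T ∪ T')) ⊆ cs Y (f.1 T) := thread_cs_subset f Finset.subset_union_left
  obtain ⟨v, hv⟩ := cs_nonempty (f.1 (T ∪ T'))
  have hvZ : v ∈ ((sat H (↑(T ∪ T') : Set V))ᶜ : Set V) := cs_subset _ hv
  refine hvZ ?_
  refine Subgroup.satSet_mono _ ?_ (hT' (h1 hv))
  rw [Finset.coe_union]
  exact Set.subset_union_right

/-- Refinement: an unbounded component contains an unbounded component at any finer stage. -/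
theorem unbounded_refine (haut : ∀ (g : H) (u v : V), Y.Adj (g • u) (g • v) ↔ Y.Adj u v) (hconn : Y.Connected) (hlf : ∀ v : V, (Y.neighborSet v).Finite)
    {S S' : Finset V} (h : S ⊆ S') (hS'ne : (↑S' : Set V).Nonempty)
    {c : (Y.induce ((sat H (↑S : Set V))ᶜ)).ConnectedComponent} (hc : ¬ bdd H (cs Y c)) :
    ∃ d : (Y.induce ((sat H (↑S' : Set V))ᶜ)).ConnectedComponent,
      ¬ bdd H (cs Y d) ∧ cmap Y (satc_antitone h) d = c := by
  classical
  obtain ⟨R, -, -, hBbdd⟩ := BSet_structure haut hconn hlf (S := (↑S' : Set V))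
    (S'.finite_toSet) hS'ne
  have hbig : bdd H (sat H (↑S' : Set V) ∪ BSet H Y (↑S' : Set V)) :=
    bdd_union ⟨S', le_refl _⟩ hBbdd
  have : ¬ (cs Y c ⊆ sat H (↑S' : Set V) ∪ BSet H Y (↑S' : Set V)) := by
    intro hsub
    exact hc (bdd_mono hsub hbig)
  obtain ⟨v, hvc, hv⟩ := Set.not_subset.mp this
  rw [Set.mem_union] at hv
  push_neg at hv
  obtain ⟨hv1, hv2⟩ := hv
  have hvZ' : v ∈ ((sat H (↑S' : Set V))ᶜ : Set V) := hv1
  refine ⟨(Y.induce _).connectedComponentMk ⟨v, hvZ'⟩, ?_, ?_⟩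
  · intro hbdd
    refine hv2 (mem_BSet_of_bdd hbdd ?_)
    exact mem_cs.mpr ⟨hvZ', rfl⟩
  · rw [cmap_mk]
    exact (mem_cs.mp hvc).2

end Threads

/-! ### Every unbounded component is the value of a thread -/

section Alive

theorem unbounded_alive (haut : ∀ (g : H) (u v : V), Y.Adj (g • u) (g • v) ↔ Y.Adj u v)
    (hconn : Y.Connected) (hlf : ∀ v : V, (Y.neighborSet v).Finite)
    {D : ℕ → Finset V} (hmono : ∀ n m, n ≤ m → D n ⊆ D m) (hcov : ∀ v : V, ∃ n, v ∈ D n)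
    (S₀ : Finset V) (hS₀ne : (↑S₀ : Set V).Nonempty)
    (c : (Y.induce ((sat H (↑S₀ : Set V))ᶜ)).ConnectedComponent) (hc : ¬ bdd H (cs Y c)) :
    ∃ f : filteredEnds Y (⊤ : Subgroup H), f.1 S₀ = c := by
  classical
  set Sn : ℕ → Finset V := fun n => S₀ ∪ D n with hSndef
  have hSmono : ∀ {n m : ℕ}, n ≤ m → Sn n ⊆ Sn m := fun {n m} h =>
    Finset.union_subset_union (le_refl _) (hmono n m h)
  have hsub0 : ∀ n, S₀ ⊆ Sn n := fun n => Finset.subset_union_left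
  have hSne : ∀ n, (↑(Sn n) : Set V).Nonempty := fun n => by
    obtain ⟨v, hv⟩ := hS₀ne
    exact ⟨v, by simpa [hSndef] using Or.inl hv⟩
  have hZ : ∀ n, inv H ((sat H (↑(Sn n) : Set V))ᶜ : Set V) := fun n => inv_satc _
  have hZ0 : inv H ((sat H (↑S₀ : Set V))ᶜ : Set V) := inv_satc _
  -- the sets P n of candidate components
  set P : ∀ n : ℕ, Set ((Y.induce ((sat H (↑(Sn n) : Set V))ᶜ)).ConnectedComponent) :=
    fun n => {d | ¬ bdd H (cs Y d) ∧
      ∃ g : H, cmap Y (satc_antitone (hsub0 n)) d = cact haut hZ0 g c} with hPdef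
  have hPne : ∀ n, (P n).Nonempty := by
    intro n
    obtain ⟨d, hd1, hd2⟩ := unbounded_refine haut hconn hlf (hsub0 n) (hSne n) hc
    exact ⟨d, hd1, 1, by rw [hd2, cact_one]⟩
  have hPinv : ∀ n (g : H) d, d ∈ P n → cact haut (hZ n) g d ∈ P n := by
    rintro n g d ⟨hd1, g', hd2⟩
    refine ⟨?_, g * g', ?_⟩
    · intro hb
      have := bdd_cs_cact haut (hZ n) (g := g⁻¹) hb
      rw [cact_inv_cact] at this
      exact hd1 this
    · rw [cmap_cact haut (hZ0) (hZ n), hd2, cact_cact]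
  have hPmap : ∀ {n m : ℕ} (h : n ≤ m) (d : _), d ∈ P m →
      cmap Y (satc_antitone (hSmono h)) d ∈ P n := by
    rintro n m h d ⟨hd1, g, hd2⟩
    refine ⟨?_, g, ?_⟩
    · intro hb
      exact hd1 (bdd_mono (cs_cmap _ d) hb)
    · rw [cmap_comp]
      exact hd2
  -- images
  set Im : ∀ (n m : ℕ), n ≤ m →
      Set ((Y.induce ((sat H (↑(Sn n) : Set V))ᶜ)).ConnectedComponent) :=
    fun n m h => (cmap Y (satc_antitone (hSmono h))) '' (P m) with hImdef
  have hImP : ∀ n m (h : n ≤ m), Im n m h ⊆ P n := by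
    rintro n m h x ⟨d, hd, rfl⟩
    exact hPmap h d hd
  have hImne : ∀ n m (h : n ≤ m), (Im n m h).Nonempty := fun n m h =>
    (hPne m).image _
  have hIminv : ∀ n m (h : n ≤ m) (g : H) x, x ∈ Im n m h → cact haut (hZ n) g x ∈ Im n m h := by
    rintro n m h g x ⟨d, hd, rfl⟩
    refine ⟨cact haut (hZ m) g d, hPinv m g d hd, ?_⟩
    rw [cmap_cact haut (hZ n) (hZ m)]
  have hImanti : ∀ n m m' (h : n ≤ m) (h' : m ≤ m'), Im n m' (h.trans h') ⊆ Im n m h := by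
    rintro n m m' h h' x ⟨d, hd, rfl⟩
    refine ⟨cmap Y (satc_antitone (hSmono h')) d, hPmap h' d hd, ?_⟩
    rw [cmap_comp]
  -- stabilization
  have hstab : ∀ n : ℕ, ∃ M : ℕ, ∃ hnM : n ≤ M, ∀ m (hnm : n ≤ m), M ≤ m →
      Im n m hnm = Im n M hnM := by
    intro n
    obtain ⟨Reps, hRfin, hRall⟩ := exists_reps haut hconn hlf
      (S := (↑(Sn n) : Set V)) (Finset.finite_toSet _) (hSne n)
    set θ : ℕ → ℕ :=
      fun k => (hRfin.toFinset.filter (· ∈ Im n (n + k) (Nat.le_add_right n k))).card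
      with hθdef
    have hθanti : ∀ k k', k ≤ k' → θ k' ≤ θ k := by
      intro k k' hk
      refine Finset.card_le_card ?_
      intro r hr
      simp only [hθdef, Finset.mem_filter] at hr ⊢
      exact ⟨hr.1, hImanti n (n+k) (n+k') (Nat.le_add_right n k) (by omega) hr.2⟩
    obtain ⟨k₀, hk₀⟩ : ∃ k₀, ∀ k, θ k₀ ≤ θ k := by
      obtain ⟨x, hmem, hmin⟩ := Nat.lt_wfRel.wf.has_min (Set.range θ) ⟨θ 0, 0, rfl⟩
      obtain ⟨k₀', rfl⟩ := hmem
      exact ⟨k₀', fun k => not_lt.mp (hmin (θ k) ⟨k, rfl⟩)⟩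
    refine ⟨n + k₀, Nat.le_add_right n k₀, ?_⟩
    intro m hnm hm
    obtain ⟨k, rfl⟩ : ∃ k, m = n + k := ⟨m - n, by omega⟩
    have hkk : k₀ ≤ k := by omega
    -- filters are equal
    have hfeq : hRfin.toFinset.filter (· ∈ Im n (n + k) (Nat.le_add_right n k))
        = hRfin.toFinset.filter (· ∈ Im n (n + k₀) (Nat.le_add_right n k₀)) := by
      have hsub : hRfin.toFinset.filter (· ∈ Im n (n + k) (Nat.le_add_right n k))
          ⊆ hRfin.toFinset.filter (· ∈ Im n (n + k₀) (Nat.le_add_right n k₀)) := by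
        intro r hr
        simp only [Finset.mem_filter] at hr ⊢
        exact ⟨hr.1, hImanti n (n+k₀) (n+k) (Nat.le_add_right n k₀) (by omega) hr.2⟩
      refine Finset.eq_of_subset_of_card_le hsub ?_
      exact hk₀ k
    have himp : ∀ (k₁ k₂ : ℕ),
        (hRfin.toFinset.filter (· ∈ Im n (n + k₁) (Nat.le_add_right n k₁))
          = hRfin.toFinset.filter (· ∈ Im n (n + k₂) (Nat.le_add_right n k₂))) →
        Im n (n + k₁) (Nat.le_add_right n k₁) ⊆ Im n (n + k₂) (Nat.le_add_right n k₂) := by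
      intro k₁ k₂ hf x hx
      obtain ⟨g, r, hr, rfl⟩ := hRall x
      have hrIm : r ∈ Im n (n + k₁) (Nat.le_add_right n k₁) := by
        have := hIminv n (n+k₁) (Nat.le_add_right n k₁) g⁻¹ _ hx
        rwa [cact_inv_cact] at this
      have hmem : r ∈ hRfin.toFinset.filter (· ∈ Im n (n + k₁) (Nat.le_add_right n k₁)) := by
        simp only [Finset.mem_filter, Set.Finite.mem_toFinset]
        exact ⟨hr, hrIm⟩
      rw [hf] at hmem
      simp only [Finset.mem_filter] at hmem
      exact hIminv n (n+k₂) (Nat.le_add_right n k₂) g r hmem.2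
    exact Set.Subset.antisymm (himp k k₀ hfeq) (himp k₀ k hfeq.symm)
  choose M hnM hMstab using hstab
  -- the eventual images
  set E : ∀ n : ℕ, Set ((Y.induce ((sat H (↑(Sn n) : Set V))ᶜ)).ConnectedComponent) :=
    fun n => Im n (M n) (hnM n) with hEdef
  have hEne : ∀ n, (E n).Nonempty := fun n => hImne n (M n) (hnM n)
  have hEP : ∀ n, E n ⊆ P n := fun n => hImP n (M n) (hnM n)
  -- surjectivity of the bonding maps between eventual images
  have hEsurj : ∀ n (x : _), x ∈ E n → ∃ z, z ∈ E (n+1) ∧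
      cmap Y (satc_antitone (hSmono (Nat.le_succ n))) z = x := by
    intro n x hx
    set m : ℕ := max (M n) (M (n+1)) with hmdef
    have hnm : n ≤ m := (hnM n).trans (le_max_left _ _)
    have hx' : x ∈ Im n m hnm := by
      rw [hMstab n m hnm (le_max_left _ _)]
      exact hx
    obtain ⟨y, hy, rfl⟩ := hx'
    refine ⟨cmap Y (satc_antitone (hSmono ((hnM (n+1)).trans (le_max_right (M n) (M (n+1)))))) y,
      ?_, ?_⟩
    · have : cmap Y (satc_antitone (hSmono ((hnM (n+1)).trans (le_max_right (M n) (M (n+1)))))) y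
          ∈ Im (n+1) m ((hnM (n+1)).trans (le_max_right _ _)) := ⟨y, hy, rfl⟩
      rwa [hMstab (n+1) m ((hnM (n+1)).trans (le_max_right _ _)) (le_max_right _ _)] at this
    · rw [cmap_comp]
  -- build the chain
  have hstep : ∀ n (p : {x // x ∈ E n}), ∃ z : {x // x ∈ E (n+1)},
      cmap Y (satc_antitone (hSmono (Nat.le_succ n))) z.1 = p.1 := by
    intro n p
    obtain ⟨z, hz1, hz2⟩ := hEsurj n p.1 p.2
    exact ⟨⟨z, hz1⟩, hz2⟩
  choose stepf hstepf using hstep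
  obtain ⟨x₀, hx₀⟩ := hEne 0
  set dchain : ∀ n : ℕ, {x // x ∈ E n} := fun n => Nat.rec ⟨x₀, hx₀⟩ (fun n p => stepf n p) n
    with hdchaindef
  have hdchain : ∀ n, cmap Y (satc_antitone (hSmono (Nat.le_succ n))) (dchain (n+1)).1
      = (dchain n).1 := by
    intro n
    exact hstepf n (dchain n)
  -- conjugate so that the chain starts at c
  obtain ⟨-, g₀, hg₀⟩ := hEP 0 (dchain 0).2
  set d : ∀ n : ℕ, (Y.induce ((sat H (↑(Sn n) : Set V))ᶜ)).ConnectedComponent :=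
    fun n => cact haut (hZ n) g₀⁻¹ (dchain n).1 with hddef
  have hd : ∀ n, cmap Y (satc_antitone (hSmono (Nat.le_succ n))) (d (n+1)) = d n := by
    intro n
    rw [hddef]
    rw [cmap_cact haut (hZ n) (hZ (n+1)), hdchain n]
  have hd0 : cmap Y (satc_antitone (hsub0 0)) (d 0) = c := by
    rw [hddef]
    rw [cmap_cact haut hZ0 (hZ 0), hg₀, cact_cact, inv_mul_cancel, cact_one]
  -- chain compatibility across levels
  have hchain' : ∀ n m (h : n ≤ m), cmap Y (satc_antitone (hSmono h)) (d m) = d n := by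
    intro n m h
    induction m with
    | zero =>
      obtain rfl : n = 0 := Nat.le_zero.mp h
      exact cmap_id _
    | succ m ih =>
      rcases Nat.le_succ_iff_eq_or_le.mp h with rfl | h'
      · exact cmap_id _
      · calc cmap Y (satc_antitone (hSmono h)) (d (m+1))
            = cmap Y (satc_antitone (hSmono h'))
              (cmap Y (satc_antitone (hSmono (Nat.le_succ m))) (d (m+1))) := by
              rw [cmap_comp]
          _ = d n := by rw [hd m]; exact ih h'
  -- well-definedness of pushing down to an arbitrary finite set
  have hwelldef : ∀ (T : Finset V) (n m : ℕ) (hTn : T ⊆ Sn n) (hTm : T ⊆ Sn m),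
      cmap Y (satc_antitone hTn) (d n) = cmap Y (satc_antitone hTm) (d m) := by
    have key : ∀ (T : Finset V) (n m : ℕ) (h : n ≤ m) (hTn : T ⊆ Sn n) (hTm : T ⊆ Sn m),
        cmap Y (satc_antitone hTn) (d n) = cmap Y (satc_antitone hTm) (d m) := by
      intro T n m h hTn hTm
      rw [← hchain' n m h, cmap_comp]
    intro T n m hTn hTm
    rcases le_total n m with h | h
    · exact key T n m h hTn hTm
    · exact (key T m n h hTm hTn).symm
  -- index function
  have hidx : ∀ T : Finset V, ∃ n, T ⊆ Sn n := by
    intro T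
    obtain ⟨n, hn⟩ := exhaustion_cofinal hmono hcov T
    exact ⟨n, hn.trans Finset.subset_union_right⟩
  choose idx hidx' using hidx
  -- the thread
  refine ⟨⟨fun T => cmap Y (satc_antitone (hidx' T)) (d (idx T)), ?_⟩, ?_⟩
  · intro T T' hTT'
    show cmap Y _ (cmap Y (satc_antitone (hidx' T')) (d (idx T'))) = _
    rw [cmap_comp]
    exact hwelldef T (idx T') (idx T) (hTT'.trans (hidx' T')) (hidx' T)
  · show cmap Y (satc_antitone (hidx' S₀)) (d (idx S₀)) = c
    rw [hwelldef S₀ (idx S₀) 0 (hidx' S₀) (hsub0 0)]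
    exact hd0

end Alive

/-! ### Enumerating the threads -/

section Enum

theorem threads_enum {e : ℕ} (hE : Cardinal.mk (filteredEnds Y (⊤ : Subgroup H)) = e) :
    ∃ f : Fin e → filteredEnds Y (⊤ : Subgroup H), Function.Bijective f := by
  have : Cardinal.mk (filteredEnds Y (⊤ : Subgroup H)) = Cardinal.mk (Fin e) := by
    rw [hE, Cardinal.mk_fin]
  obtain ⟨φ⟩ := Cardinal.eq.mp this
  exact ⟨φ.symm, φ.symm.bijective⟩

theorem exists_sep {e : ℕ} (f : Fin e → filteredEnds Y (⊤ : Subgroup H))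
    (hinj : Function.Injective f) :
    ∃ S₁ : Finset V, ∀ T : Finset V, S₁ ⊆ T → ∀ i j : Fin e,
      (f i).1 T = (f j).1 T → i = j := by
  classical
  have hdiff : ∀ p : Fin e × Fin e, ∃ T₀ : Finset V,
      p.1 ≠ p.2 → (f p.1).1 T₀ ≠ (f p.2).1 T₀ := by
    rintro ⟨i, j⟩
    by_cases hij : i = j
    · exact ⟨∅, fun h => absurd hij h⟩
    · by_contra hcon
      push_neg at hcon
      have : f i = f j := by
        apply Subtype.ext
        funext T
        exact (hcon T).2
      exact hij (hinj this)
  choose T₀ hT₀ using hdiff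
  refine ⟨Finset.univ.sup T₀, ?_⟩
  intro T hT i j hfij
  by_contra hij
  refine hT₀ (i, j) hij ?_
  have hsub : T₀ (i, j) ⊆ T := (Finset.le_sup (Finset.mem_univ (i, j))).trans hT
  rw [← thread_compat (f i) hsub, ← thread_compat (f j) hsub, hfij]

end Enum

/-! ### The main per-stage construction -/

section MainStep

theorem main_step (haut : ∀ (g : H) (u v : V), Y.Adj (g • u) (g • v) ↔ Y.Adj u v)
    (hconn : Y.Connected) (hlf : ∀ v : V, (Y.neighborSet v).Finite)
    {D : ℕ → Finset V} (hmono : ∀ n m, n ≤ m → D n ⊆ D m) (hcov : ∀ v : V, ∃ n, v ∈ D n)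
    {e : ℕ} (f : Fin e → filteredEnds Y (⊤ : Subgroup H)) (hsurj : Function.Surjective f)
    {S₁ : Finset V} (hsep : ∀ T : Finset V, S₁ ⊆ T → ∀ i j : Fin e,
      (f i).1 T = (f j).1 T → i = j)
    (D₀ : Finset V) :
    ∃ C : Finset V, D₀ ⊆ C ∧
      Nat.card ((Y.induce ((sat H (↑C : Set V))ᶜ)).ConnectedComponent) = e ∧
      (∀ c : (Y.induce ((sat H (↑C : Set V))ᶜ)).ConnectedComponent, ¬ bdd H (cs Y c)) ∧
      (Y.induce ((↑C : Set V) ∪ (sat H (↑C : Set V))ᶜ)).Connected := by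
  classical
  obtain ⟨v₀⟩ := hconn.nonempty
  set T : Finset V := insert v₀ (D₀ ∪ S₁) with hTdef
  have hv₀T : v₀ ∈ T := Finset.mem_insert_self _ _
  have hTne : (↑T : Set V).Nonempty := ⟨v₀, hv₀T⟩
  have hS₁T : S₁ ⊆ T := fun x hx => Finset.mem_insert_of_mem (Finset.mem_union_right _ hx)
  have hD₀T : D₀ ⊆ T := fun x hx => Finset.mem_insert_of_mem (Finset.mem_union_left _ hx)
  -- bounded part
  obtain ⟨R, hRB, hRsat, hBbdd⟩ := BSet_structure haut hconn hlf
    (S := (↑T : Set V)) (Finset.finite_toSet _) hTne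
  set B : Set V := BSet H Y (↑T : Set V) with hBdef
  set A : Set V := sat H (↑T : Set V) ∪ B with hAdef
  have hAZ : Aᶜ ⊆ ((sat H (↑T : Set V))ᶜ : Set V) := by
    intro v hv
    exact fun hmem => hv (Or.inl hmem)
  -- components of the complement of the saturation of T which are unbounded avoid B
  have hcsB : ∀ (cT : (Y.induce ((sat H (↑T : Set V))ᶜ)).ConnectedComponent),
      ¬ bdd H (cs Y cT) → ∀ v ∈ cs Y cT, v ∉ B := by
    intro cT hcT v hv hvB
    obtain ⟨c', hc'b, hvc'⟩ := hvB
    exact hcT (cs_eq_of_mem hv hvc' ▸ hc'b)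
  have hcsA : ∀ (cT : (Y.induce ((sat H (↑T : Set V))ᶜ)).ConnectedComponent),
      ¬ bdd H (cs Y cT) → cs Y cT ⊆ Aᶜ := by
    intro cT hcT v hv
    rintro (hmem | hmem)
    · exact (cs_subset cT hv) hmem
    · exact hcsB cT hcT v hv hmem
  -- every unbounded component at level T is a thread value
  have halive : ∀ (cT : (Y.induce ((sat H (↑T : Set V))ᶜ)).ConnectedComponent),
      ¬ bdd H (cs Y cT) → ∃ i : Fin e, (f i).1 T = cT := by
    intro cT hcT
    obtain ⟨g, hg⟩ := unbounded_alive haut hconn hlf hmono hcov T hTne cT hcT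
    obtain ⟨i, rfl⟩ := hsurj g
    exact ⟨i, hg⟩
  -- reachability inside the support of a component, within any superset of the support
  have hreachcs : ∀ {Z' : Set V} (cT : (Y.induce ((sat H (↑T : Set V))ᶜ)).ConnectedComponent)
      (hsub : cs Y cT ⊆ Z') {a b : V} (ha : a ∈ cs Y cT) (hb : b ∈ cs Y cT),
      (Y.induce Z').Reachable ⟨a, hsub ha⟩ ⟨b, hsub hb⟩ := by
    intro Z' cT hsub a b ha hb
    obtain ⟨w, hw⟩ := exists_walk_in_cs ha hb
    exact reachable_induce_of_walk w (fun x hx => hsub (hw x hx))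
  -- the canonical map from components of the complement of A
  have hΦcs : ∀ d : (Y.induce (Aᶜ)).ConnectedComponent,
      ¬ bdd H (cs Y (cmap Y hAZ d)) ∧ cs Y d = cs Y (cmap Y hAZ d) := by
    intro d
    obtain ⟨v, hv⟩ := cs_nonempty d
    have hvA : v ∈ Aᶜ := cs_subset d hv
    have hvΦ : v ∈ cs Y (cmap Y hAZ d) := cs_cmap hAZ d hv
    have hunb : ¬ bdd H (cs Y (cmap Y hAZ d)) := by
      intro hbdd
      exact hvA (Or.inr (mem_BSet_of_bdd hbdd hvΦ))
    refine ⟨hunb, Set.Subset.antisymm (cs_cmap hAZ d) ?_⟩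
    intro w hw
    have hr := hreachcs (cmap Y hAZ d) (hcsA _ hunb) hvΦ hw
    obtain ⟨hzv, hzc⟩ := mem_cs.mp hv
    refine mem_cs.mpr ⟨hcsA _ hunb hw, ?_⟩
    exact ((ConnectedComponent.sound hr).symm.trans hzc)
  have hΦinj : Function.Injective (cmap Y hAZ) := by
    intro d d' hdd'
    obtain ⟨v, hv⟩ := cs_nonempty d
    have : v ∈ cs Y d' := by
      rw [(hΦcs d').2, ← hdd', ← (hΦcs d).2]
      exact hv
    exact cs_eq_of_mem hv this
  -- the equivalence with Fin e
  have hvex : ∀ i : Fin e, ∃ v : V, v ∈ cs Y ((f i).1 T) ∧ v ∈ Aᶜ := by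
    intro i
    obtain ⟨v, hv⟩ := cs_nonempty ((f i).1 T)
    exact ⟨v, hv, hcsA _ (thread_unbounded (f i) T) hv⟩
  choose vv hvv1 hvv2 using hvex
  set Ψ : Fin e → (Y.induce (Aᶜ)).ConnectedComponent :=
    fun i => (Y.induce (Aᶜ)).connectedComponentMk ⟨vv i, hvv2 i⟩ with hΨdef
  have hΦΨ : ∀ i, cmap Y hAZ (Ψ i) = (f i).1 T := by
    intro i
    rw [hΨdef, cmap_mk]
    exact (mem_cs.mp (hvv1 i)).2
  have hΨbij : Function.Bijective Ψ := by
    constructor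
    · intro i j hij
      refine hsep T hS₁T i j ?_
      rw [← hΦΨ i, ← hΦΨ j, hij]
    · intro d
      obtain ⟨i, hi⟩ := halive (cmap Y hAZ d) (hΦcs d).1
      refine ⟨i, hΦinj ?_⟩
      rw [hΦΨ i, hi]
  -- walks
  set wu : ∀ u ∈ T ∪ R, Y.Walk v₀ u := fun u _ => (hconn.preconnected v₀ u).some with hwudef
  set wi : ∀ i : Fin e, Y.Walk v₀ (vv i) := fun i => (hconn.preconnected v₀ (vv i)).some
    with hwidef
  set Cset : Set V := ((↑(T ∪ R) : Set V)
      ∪ (⋃ u ∈ T ∪ R, {x | x ∈ ((hconn.preconnected v₀ u).some : Y.Walk v₀ u).support})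
      ∪ (⋃ i : Fin e, {x | x ∈ (wi i).support})) ∩ A with hCsetdef
  have hCfin : Cset.Finite := by
    refine Set.Finite.inter_of_left ?_ _
    refine Set.Finite.union (Set.Finite.union (Finset.finite_toSet _) ?_) ?_
    · exact Set.Finite.biUnion (Finset.finite_toSet _)
        (fun u _ => List.finite_toSet _)
    · exact Set.finite_iUnion (fun i => List.finite_toSet _)
  set C : Finset V := hCfin.toFinset with hCdef
  -- basic containments
  have hTRA : (↑(T ∪ R) : Set V) ⊆ A := by
    intro x hx
    rw [Finset.coe_union] at hx
    rcases hx with hx | hx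
    · exact Or.inl (subset_sat _ hx)
    · exact Or.inr (hRB hx)
  have hTRC : (↑(T ∪ R) : Set V) ⊆ (↑C : Set V) := by
    intro x hx
    rw [hCdef, Set.Finite.coe_toFinset]
    exact ⟨Or.inl (Or.inl hx), hTRA hx⟩
  have hCA : (↑C : Set V) ⊆ A := by
    intro x hx
    rw [hCdef, Set.Finite.coe_toFinset] at hx
    exact hx.2
  have hAinv : inv H A := by
    rintro g v (hv | hv)
    · exact Or.inl (smul_mem_sat g hv)
    · exact Or.inr (BSet_inv haut g v hv)
  have hsatC : sat H (↑C : Set V) = A := by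
    apply Set.Subset.antisymm
    · exact sat_subset_of_invariant hCA hAinv
    · calc A = sat H (↑T : Set V) ∪ sat H (↑R : Set V) := by rw [hRsat]
        _ = sat H (↑(T ∪ R) : Set V) := by rw [Finset.coe_union, sat_union]
        _ ⊆ sat H (↑C : Set V) := Subgroup.satSet_mono _ hTRC
  refine ⟨C, ?_, ?_, ?_, ?_⟩
  · -- D₀ ⊆ C
    intro x hx
    have hx2 : x ∈ (↑(T ∪ R) : Set V) := Finset.mem_coe.mpr (Finset.mem_union_left _ (hD₀T hx))
    exact Finset.mem_coe.mp (hTRC hx2)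
  · -- Nat.card
    rw [hsatC]
    exact Nat.card_eq_of_equiv_fin (Equiv.ofBijective Ψ hΨbij).symm
  · -- all components unbounded
    rw [hsatC]
    intro d hbdd
    exact (hΦcs d).1 (bdd_mono (le_of_eq (hΦcs d).2.symm) hbdd)
  · -- connectivity
    rw [hsatC]
    have hv₀mem : v₀ ∈ (↑C : Set V) ∪ Aᶜ := by
      exact Or.inl (hTRC (by simp [hv₀T]))
    haveI : Nonempty ((↑C : Set V) ∪ Aᶜ : Set V) := ⟨⟨v₀, hv₀mem⟩⟩
    refine ⟨?_⟩
    -- preconnectedness: everything reaches v₀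
    have hwalkC : ∀ {u : V} (w : Y.Walk v₀ u)
        (hwC : ∀ x ∈ w.support, x ∈ A → x ∈ (↑C : Set V))
        (z : V) (hz : z ∈ w.support) (hzm : z ∈ (↑C : Set V) ∪ Aᶜ),
          (Y.induce ((↑C : Set V) ∪ Aᶜ)).Reachable ⟨z, hzm⟩ ⟨v₀, hv₀mem⟩ := by
      intro u w hwC z hz hzm
      have hsupp : ∀ x ∈ (w.takeUntil z hz).support, x ∈ (↑C : Set V) ∪ Aᶜ := by
        intro x hx
        have hxw : x ∈ w.support := w.support_takeUntil_subset hz hx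
        by_cases hxA : x ∈ A
        · exact Or.inl (hwC x hxw hxA)
        · exact Or.inr hxA
      exact (reachable_induce_of_walk (w.takeUntil z hz) hsupp).symm
    intro a b
    have hgoal : ∀ z (hz : z ∈ (↑C : Set V) ∪ Aᶜ),
        (Y.induce ((↑C : Set V) ∪ Aᶜ)).Reachable ⟨z, hz⟩ ⟨v₀, hv₀mem⟩ := by
      intro z hz
      have hwiC : ∀ i : Fin e, ∀ x ∈ (wi i).support, x ∈ A → x ∈ (↑C : Set V) := by
        intro i x hx hxA
        rw [hCdef, Set.Finite.coe_toFinset]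
        exact ⟨Or.inr (Set.mem_iUnion.mpr ⟨i, hx⟩), hxA⟩
      have hwuC : ∀ u (hu : u ∈ T ∪ R),
          ∀ x ∈ ((hconn.preconnected v₀ u).some : Y.Walk v₀ u).support,
          x ∈ A → x ∈ (↑C : Set V) := by
        intro u hu x hx hxA
        rw [hCdef, Set.Finite.coe_toFinset]
        refine ⟨Or.inl (Or.inr ?_), hxA⟩
        exact Set.mem_biUnion hu hx
      rcases hz with hzC | hzA
      · -- z is in C: lies on one of the chosen walks
        have hz' : z ∈ Cset := (Set.Finite.mem_toFinset hCfin).mp hzC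
        obtain ⟨hzU, hzA2⟩ := hz'
        rcases hzU with (hzTR | hzW) | hzI
        · -- z ∈ T ∪ R : endpoint of its own walk
          exact hwalkC ((hconn.preconnected v₀ z).some) (hwuC z hzTR) z
            (Walk.end_mem_support _) _
        · -- z on a walk to some u
          obtain ⟨u, hu, hzu⟩ := Set.mem_iUnion₂.mp hzW
          exact hwalkC ((hconn.preconnected v₀ u).some) (hwuC u hu) z hzu _
        · -- z on a walk to some vv i
          obtain ⟨i, hzi⟩ := Set.mem_iUnion.mp hzI
          exact hwalkC (wi i) (hwiC i) z hzi _
      · -- z in the complement of A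
        set d : (Y.induce (Aᶜ)).ConnectedComponent :=
          (Y.induce (Aᶜ)).connectedComponentMk ⟨z, hzA⟩ with hddef
        obtain ⟨i, hi⟩ := hΨbij.2 d
        have hzd : z ∈ cs Y d := mem_cs.mpr ⟨hzA, rfl⟩
        have hvid : vv i ∈ cs Y d := by
          rw [← hi]
          exact mem_cs.mpr ⟨hvv2 i, rfl⟩
        -- reach vv i inside the complement of A
        have hr1 : (Y.induce (Aᶜ)).Reachable ⟨z, hzA⟩ ⟨vv i, hvv2 i⟩ := by
          obtain ⟨w, hw⟩ := exists_walk_in_cs hzd hvid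
          exact reachable_induce_of_walk w (fun x hx => cs_subset d (hw x hx))
        have hr1' := hr1.map (Y.inclHom (Set.subset_union_right :
          Aᶜ ⊆ (↑C : Set V) ∪ Aᶜ))
        have hr2 := hwalkC (wi i) (hwiC i) (vv i) (Walk.end_mem_support _)
          (Or.inr (hvv2 i))
        exact Reachable.trans (by exact hr1') hr2
    exact (hgoal a.1 a.2).trans (hgoal b.1 b.2).symm

end MainStep

end Stmt11

/-- Compatible filtrations: given `e(Y,H) = e` finite nonzero and `K ≤ H`, there are finite
sets `C̃ₙ` and `Ĉₙ` with `K•C̃ₙ` exhausting `V`, with the complement of `H•C̃ₙ` having exactly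
`e` components, all `H`-unbounded, and with `Ĉₙ ∪ (V ∖ H•C̃ₙ)` inducing a connected subgraph. -/
theorem stmt11 {V H : Type} [Group H] [MulAction H V] (Y : SimpleGraph V)
    (hconn : Y.Connected)
    (hlf : ∀ v : V, (Y.neighborSet v).Finite)
    (hfree : ∀ (g : H) (v : V), g • v = v → g = 1)
    (haut : ∀ (g : H) (u v : V), Y.Adj (g • u) (g • v) ↔ Y.Adj u v)
    (K : Subgroup H)
    (e : ℕ) (he : e ≠ 0)
    (hE : Cardinal.mk (filteredEnds Y (⊤ : Subgroup H)) = e) :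
    ∃ Ct Chat : ℕ → Finset V,
      ((∀ n, K.satSet ((Ct n : Finset V) : Set V) ⊆ K.satSet ((Ct (n+1) : Finset V) : Set V)) ∧
        (⋃ n, K.satSet ((Ct n : Finset V) : Set V)) = Set.univ) ∧
      (∀ n,
        Nat.card ((Y.induce (((⊤ : Subgroup H).satSet ((Ct n : Finset V) : Set V))ᶜ)).ConnectedComponent) = e ∧
        ∀ c : (Y.induce (((⊤ : Subgroup H).satSet ((Ct n : Finset V) : Set V))ᶜ)).ConnectedComponent,
          ¬ (⊤ : Subgroup H).bddSet (Subtype.val '' c.supp)) ∧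
      (∀ n,
        Ct n ⊆ Chat n ∧
        ((Chat n : Finset V) : Set V) ∩ (⊤ : Subgroup H).satSet ((Ct n : Finset V) : Set V)
          = ((Ct n : Finset V) : Set V) ∧
        ((Chat n : Finset V) : Set V) ⊆ (⊤ : Subgroup H).satSet ((Ct n : Finset V) : Set V)
          ∪ Y.nbhd ((⊤ : Subgroup H).satSet ((Ct n : Finset V) : Set V)) ∧
        (Y.induce (((Chat n : Finset V) : Set V)
          ∪ ((⊤ : Subgroup H).satSet ((Ct n : Finset V) : Set V))ᶜ)).Connected) := by
  classical
  obtain ⟨D, hmono, hcov⟩ := Stmt11.exists_exhaustion hconn hlf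
  obtain ⟨f, hfbij⟩ := Stmt11.threads_enum (e := e) hE
  obtain ⟨S₁, hsep⟩ := Stmt11.exists_sep f hfbij.1
  have hstep := Stmt11.main_step haut hconn hlf hmono hcov f hfbij.2 hsep
  choose Cfun h1 h2 h3 h4 using hstep
  set Ct : ℕ → Finset V := fun n => Nat.rec (Cfun (D 0)) (fun n c => Cfun (c ∪ D (n+1))) n
    with hCtdef
  have hDsub : ∀ n, D n ⊆ Ct n := by
    intro n
    cases n with
    | zero => exact h1 (D 0)
    | succ n => exact Finset.subset_union_right.trans (h1 _)
  have hmonoC : ∀ n, Ct n ⊆ Ct (n+1) := by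
    intro n
    exact Finset.subset_union_left.trans (h1 (Ct n ∪ D (n+1)))
  refine ⟨Ct, Ct, ⟨?_, ?_⟩, ?_, ?_⟩
  · intro n
    exact Subgroup.satSet_mono K (Finset.coe_subset.mpr (hmonoC n))
  · rw [Set.eq_univ_iff_forall]
    intro v
    obtain ⟨n, hn⟩ := hcov v
    exact Set.mem_iUnion.mpr ⟨n, Stmt11.subset_satK K _ (hDsub n hn)⟩
  · intro n
    cases n with
    | zero => exact ⟨h2 _, fun c => h3 _ c⟩
    | succ n => exact ⟨h2 _, fun c => h3 _ c⟩
  · intro n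
    refine ⟨subset_rfl, ?_, ?_, ?_⟩
    · exact Set.inter_eq_left.mpr (Stmt11.subset_satK ⊤ _)
    · exact fun x hx => Or.inl (Stmt11.subset_satK ⊤ _ hx)
    · cases n with
      | zero => exact h4 _
      | succ n => exact h4 _
end

section
/- Let Y be a connected, locally finite simple graph with vertex set V, let H be a group acting freely on V by automorphisms of Y, and let K ≤ H be a subgroup of infinite index. Suppose the number of filtered ends e(Y,H) is finite and nonzero. Then there exists an increasing sequence of finite subsets D₁ ⊆ D₂ ⊆ ⋯ of V with ⋃ₙ K•Dₙ = V such that for every n, the subgraph of Y induced on V ∖ K•Dₙ is nonempty, connected, and K-unbounded; that is, V ∖ K•Dₙ consists of a single K-unbounded connected component. -/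
open SimpleGraph

namespace EndsAux

variable {V H : Type} [Group H] [MulAction H V] {Y : SimpleGraph V}

/-- Reachability within a vertex set `W` (all vertices of the walk in `W`). -/
def reachIn (Y : SimpleGraph V) (W : Set V) (u v : V) : Prop :=
  ∃ p : Y.Walk u v, ∀ x ∈ p.support, x ∈ W

lemma reachIn.refl {W : Set V} {u : V} (hu : u ∈ W) : reachIn Y W u u :=
  ⟨Walk.nil, by simpa using hu⟩

lemma reachIn.symm {W : Set V} {u v : V} (h : reachIn Y W u v) : reachIn Y W v u := by
  obtain ⟨p, hp⟩ := h
  exact ⟨p.reverse, fun x hx => hp x (by simpa using hx)⟩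

lemma reachIn.trans {W : Set V} {u v w : V} (h : reachIn Y W u v) (h' : reachIn Y W v w) :
    reachIn Y W u w := by
  obtain ⟨p, hp⟩ := h; obtain ⟨q, hq⟩ := h'
  refine ⟨p.append q, fun x hx => ?_⟩
  rw [Walk.support_append] at hx
  rcases List.mem_append.mp hx with hx | hx
  · exact hp x hx
  · exact hq x (List.mem_of_mem_tail hx)

lemma reachIn.mem_left {W : Set V} {u v : V} (h : reachIn Y W u v) : u ∈ W :=
  h.choose_spec u h.choose.start_mem_support

lemma reachIn.mem_right {W : Set V} {u v : V} (h : reachIn Y W u v) : v ∈ W :=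
  h.choose_spec v h.choose.end_mem_support

lemma reachIn.mono {W W' : Set V} (hW : W ⊆ W') {u v : V} (h : reachIn Y W u v) :
    reachIn Y W' u v := by
  obtain ⟨p, hp⟩ := h; exact ⟨p, fun x hx => hW (hp x hx)⟩

/-- The connected component of `v` inside `W`, as a set of vertices. -/
def compIn (Y : SimpleGraph V) (W : Set V) (v : V) : Set V := {u | reachIn Y W v u}

lemma self_mem_compIn {W : Set V} {v : V} (hv : v ∈ W) : v ∈ compIn Y W v :=
  reachIn.refl hv

lemma compIn_subset {W : Set V} {v : V} : compIn Y W v ⊆ W := fun _ h => h.mem_right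

lemma compIn_eq_of_mem {W : Set V} {v u : V} (h : u ∈ compIn Y W v) :
    compIn Y W u = compIn Y W v := by
  ext x
  exact ⟨fun hx => (h : reachIn Y W v u).trans hx, fun hx => (h : reachIn Y W v u).symm.trans hx⟩

lemma compIn_mono {W W' : Set V} (hW : W ⊆ W') (v : V) : compIn Y W v ⊆ compIn Y W' v :=
  fun _ h => h.mono hW

/-- Walks within `W` starting at `v` stay inside the component of `v`. -/
lemma reachIn_compIn_self {W : Set V} {v u : V} (h : u ∈ compIn Y W v) :
    reachIn Y (compIn Y W v) v u := by
  classical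
  obtain ⟨p, hp⟩ := (h : reachIn Y W v u)
  exact ⟨p, fun x hx => ⟨p.takeUntil x hx, fun y hy => hp y (p.support_takeUntil_subset hx hy)⟩⟩

lemma exists_exit {W : Set V} : ∀ {v z : V}, Y.Walk v z → v ∈ W → z ∉ W →
    ∃ u x, reachIn Y W v u ∧ x ∉ W ∧ Y.Adj u x
  | v, _, Walk.nil, hv, hz => absurd hv hz
  | v, z, @SimpleGraph.Walk.cons _ _ _ b _ h q, hv, hz => by
    by_cases hb : b ∈ W
    · obtain ⟨u, x, hr, hx, ha⟩ := exists_exit q hb hz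
      refine ⟨u, x, reachIn.trans ⟨Walk.cons h Walk.nil, ?_⟩ hr, hx, ha⟩
      intro y hy
      simp only [Walk.support_cons, Walk.support_nil, List.mem_cons, List.mem_singleton] at hy
      rcases hy with rfl | rfl | h'
      · exact hv
      · exact hb
      · simp at h'
    · exact ⟨v, _, reachIn.refl hv, hb, h⟩

section Action

variable (haut : ∀ (g : H) (u v : V), Y.Adj (g • u) (g • v) ↔ Y.Adj u v)

include haut

/-- The action of `g` as a graph homomorphism. -/
def smulHom (g : H) : Y →g Y :=
  ⟨fun v => g • v, fun h => (haut _ _ _).mpr h⟩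

lemma reachIn.smul {W : Set V} {u v : V} (g : H) (h : reachIn Y W u v) :
    reachIn Y ((g • ·) '' W) (g • u) (g • v) := by
  obtain ⟨p, hp⟩ := h
  refine ⟨p.map (smulHom haut g), fun x hx => ?_⟩
  replace hx : x ∈ (p.map (smulHom haut g)).support := hx
  rw [Walk.support_map] at hx
  obtain ⟨y, hy, rfl⟩ := List.mem_map.mp hx
  exact ⟨y, hp y hy, rfl⟩

lemma smul_compIn {W : Set V} (g : H) (v : V) :
    (g • ·) '' compIn Y W v = compIn Y ((g • ·) '' W) (g • v) := by
  ext x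
  constructor
  · rintro ⟨y, hy, rfl⟩
    exact (hy : reachIn Y W v y).smul haut g
  · intro hx
    refine ⟨g⁻¹ • x, ?_, by simp⟩
    have := (hx : reachIn Y ((g • ·) '' W) (g • v) x).smul haut g⁻¹
    have himg : (g⁻¹ • ·) '' ((g • ·) '' W) = W := by
      ext w
      simp [Set.mem_image]
    rw [himg] at this
    exact (by simpa using this : reachIn Y W v (g⁻¹ • x))

end Action

section Bridge

lemma reachIn_of_induce_walk {W : Set V} : ∀ {a b : {x // x ∈ W}}, (Y.induce W).Walk a b → reachIn Y W a.1 b.1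
  | a, _, Walk.nil => reachIn.refl a.2
  | a, b, Walk.cons h q => by
    refine reachIn.trans ⟨Walk.cons h (Walk.nil), ?_⟩ (reachIn_of_induce_walk q)
    intro y hy
    change y ∈ [_, _] at hy
    simp only [List.mem_cons, List.mem_singleton] at hy
    rcases hy with rfl | rfl | h'
    · exact a.2
    · exact Subtype.coe_prop _
    · simp at h'

lemma induce_reachable_of_walk {W : Set V} : ∀ {u v : V} (p : Y.Walk u v),
    (∀ x ∈ p.support, x ∈ W) → ∀ (hu : u ∈ W) (hv : v ∈ W),
    (Y.induce W).Reachable ⟨u, hu⟩ ⟨v, hv⟩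
  | u, _, Walk.nil, _, hu, hv => by rfl
  | u, v, @SimpleGraph.Walk.cons _ _ _ b _ h q, hp, hu, hv => by
    have hb : b ∈ W := hp b (by simp)
    have : (Y.induce W).Adj ⟨u, hu⟩ ⟨b, hb⟩ := h
    exact this.reachable.trans
      (induce_reachable_of_walk q (fun x hx => hp x (by simp [hx])) hb hv)

lemma reachIn_iff_induce_reachable {W : Set V} {u v : V} (hu : u ∈ W) (hv : v ∈ W) :
    reachIn Y W u v ↔ (Y.induce W).Reachable ⟨u, hu⟩ ⟨v, hv⟩ := by
  constructor
  · rintro ⟨p, hp⟩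
    exact induce_reachable_of_walk p hp hu hv
  · rintro ⟨p⟩
    exact reachIn_of_induce_walk p

lemma connected_compIn {W : Set V} {v : V} (hv : v ∈ W) :
    (Y.induce (compIn Y W v)).Connected := by
  rw [connected_iff]
  refine ⟨fun a b => ?_, ⟨⟨v, self_mem_compIn hv⟩⟩⟩
  have ha := reachIn_compIn_self (Y := Y) a.2
  have hb := reachIn_compIn_self (Y := Y) b.2
  have := (ha.symm.trans hb)
  rw [reachIn_iff_induce_reachable a.2 b.2] at this
  exact this

end Bridge



section Sat

variable {L K : Subgroup H}

lemma subset_satSet (L : Subgroup H) (S : Set V) : S ⊆ L.satSet S :=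
  fun s hs => ⟨1, L.one_mem, s, hs, one_smul _ _⟩

lemma satSet_le_top (K : Subgroup H) (S : Set V) :
    K.satSet S ⊆ (⊤ : Subgroup H).satSet S := by
  rintro v ⟨g, _, s, hs, rfl⟩
  exact ⟨g, trivial, s, hs, rfl⟩

lemma satSet_union (L : Subgroup H) (S T : Set V) :
    L.satSet (S ∪ T) = L.satSet S ∪ L.satSet T := by
  ext v
  constructor
  · rintro ⟨g, hg, s, hs | hs, rfl⟩
    · exact Or.inl ⟨g, hg, s, hs, rfl⟩
    · exact Or.inr ⟨g, hg, s, hs, rfl⟩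
  · rintro (⟨g, hg, s, hs, rfl⟩ | ⟨g, hg, s, hs, rfl⟩)
    · exact ⟨g, hg, s, Or.inl hs, rfl⟩
    · exact ⟨g, hg, s, Or.inr hs, rfl⟩

lemma smul_mem_satSet {g : H} (hg : g ∈ L) {S : Set V} {v : V}
    (hv : v ∈ L.satSet S) : g • v ∈ L.satSet S := by
  obtain ⟨k, hk, s, hs, rfl⟩ := hv
  exact ⟨g * k, mul_mem hg hk, s, hs, (mul_smul _ _ _)⟩

lemma smul_satSet {g : H} (hg : g ∈ L) (S : Set V) :
    (g • ·) '' (L.satSet S) = L.satSet S := by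
  apply Set.Subset.antisymm
  · rintro _ ⟨y, hy, rfl⟩
    exact smul_mem_satSet hg hy
  · intro v hv
    exact ⟨g⁻¹ • v, smul_mem_satSet (inv_mem hg) hv, by simp⟩

lemma smul_satSet_compl {g : H} (hg : g ∈ L) (S : Set V) :
    (g • ·) '' (L.satSet S)ᶜ = (L.satSet S)ᶜ := by
  rw [Set.image_compl_eq (MulAction.bijective g), smul_satSet hg]

lemma mem_satSet_compl_smul {g : H} (hg : g ∈ L) {S : Set V} {v : V}
    (hv : v ∈ (L.satSet S)ᶜ) : g • v ∈ (L.satSet S)ᶜ := by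
  rw [← smul_satSet_compl hg S]
  exact ⟨v, hv, rfl⟩

lemma bddSet_smul {g : H} (hg : g ∈ L) {A : Set V} (h : L.bddSet A) :
    L.bddSet ((g • ·) '' A) := by
  obtain ⟨T, hT⟩ := h
  refine ⟨T, ?_⟩
  rintro _ ⟨y, hy, rfl⟩
  exact smul_mem_satSet hg (hT hy)

lemma bddSet_mono {A B : Set V} (h : B ⊆ A) (hA : L.bddSet A) : L.bddSet B := by
  obtain ⟨T, hT⟩ := hA
  exact ⟨T, h.trans hT⟩

lemma not_cover (K : Subgroup H) (hK : Infinite (H ⧸ K)) {Φ : Set H} (hΦ : Φ.Finite)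
    (hcov : ∀ h : H, ∃ k ∈ K, ∃ φ ∈ Φ, k * φ = h) : False := by
  haveI := hΦ.to_subtype
  have hsurj : Function.Surjective (fun φ : Φ => (QuotientGroup.mk (φ.1⁻¹) : H ⧸ K)) := by
    intro q
    obtain ⟨c, rfl⟩ := Quotient.exists_rep q
    obtain ⟨k, hk, φ, hφ, he⟩ := hcov c⁻¹
    refine ⟨⟨φ, hφ⟩, ?_⟩
    show QuotientGroup.mk φ⁻¹ = QuotientGroup.mk c
    rw [QuotientGroup.eq]
    have : c = φ⁻¹ * k⁻¹ := by
      have := congrArg (·⁻¹) he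
      simpa [mul_inv_rev] using this.symm
    simp [this, mul_assoc]
    exact hk
  haveI : Finite (H ⧸ K) := Finite.of_surjective _ hsurj
  exact not_finite (H ⧸ K)

variable (hfree : ∀ (g : H) (v : V), g • v = v → g = 1)

include hfree in
lemma not_bdd_compl (hK : Infinite (H ⧸ K)) (v₀ : V) (G : Finset V) :
    ¬ K.bddSet ((K.satSet (G : Set V))ᶜ) := by
  rintro ⟨T, hT⟩
  classical
  have hcover : ∀ v : V, v ∈ K.satSet ((G ∪ T : Finset V) : Set V) := by
    intro v
    rw [Finset.coe_union, satSet_union]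
    by_cases h : v ∈ K.satSet (G : Set V)
    · exact Or.inl h
    · exact Or.inr (hT h)
  set Φ : Set H := {g | g • v₀ ∈ ((G ∪ T : Finset V) : Set V)} with hΦdef
  have hΦ : Φ.Finite := by
    have hinj : Set.InjOn (fun g : H => g • v₀) Φ := by
      intro a _ b _ hab
      simp only at hab
      have h1 : (b⁻¹ * a) • v₀ = v₀ := by
        rw [mul_smul, hab]; simp
      have := hfree _ _ h1
      have : b * (b⁻¹ * a) = b * 1 := by rw [this]
      simpa [mul_assoc] using this
    have himg : ((fun g : H => g • v₀) '' Φ).Finite :=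
      (G ∪ T).finite_toSet.subset (by rintro _ ⟨g, hg, rfl⟩; exact hg)
    exact Set.Finite.of_finite_image himg hinj
  refine not_cover K hK hΦ ?_
  intro h
  obtain ⟨k, hk, s, hs, he⟩ := hcover (h • v₀)
  refine ⟨k, hk, k⁻¹ * h, ?_, by group⟩
  have : (k⁻¹ * h) • v₀ ∈ ((G ∪ T : Finset V) : Set V) := by
    rw [mul_smul, ← he]
    simpa using hs
  exact this

end Sat



section Alpha

variable (hconn : Y.Connected)
variable (hlf : ∀ v : V, (Y.neighborSet v).Finite)
variable (haut : ∀ (g : H) (u v : V), Y.Adj (g • u) (g • v) ↔ Y.Adj u v)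

include hconn hlf haut in
/-- All `L`-bounded components of the complement of `L•S` are contained in a single
`L`-saturation of a finite set. -/
lemma bounded_comps_bounded (L : Subgroup H) (S : Finset V) (hS : S.Nonempty) :
    ∃ T : Finset V, ∀ v ∈ (L.satSet (S : Set V))ᶜ,
      L.bddSet (compIn Y (L.satSet (S : Set V))ᶜ v) → v ∈ L.satSet (T : Set V) := by
  classical
  set W := (L.satSet (S : Set V))ᶜ with hW
  set NB : Set V := {x | ∃ s ∈ S, Y.Adj x s} with hNB
  have hNBfin : NB.Finite := by
    have hsub : NB ⊆ ⋃ s ∈ (S : Set V), Y.neighborSet s := by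
      rintro x ⟨s, hs, hadj⟩
      exact Set.mem_biUnion hs hadj.symm
    exact (Set.Finite.biUnion S.finite_toSet (fun s _ => hlf s)).subset hsub
  choose! Tx hTx using fun (x : V) (h : ∃ T' : Finset V, compIn Y W x ⊆ L.satSet (T' : Set V)) => h
  refine ⟨hNBfin.toFinset.biUnion Tx, ?_⟩
  intro v hv hbdd
  obtain ⟨s₀, hs₀⟩ := hS
  have hz : s₀ ∉ W := by
    simp only [hW, Set.mem_compl_iff, not_not]
    exact subset_satSet L _ (by exact_mod_cast hs₀)
  obtain ⟨p⟩ := hconn.preconnected v s₀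
  obtain ⟨u, x, hru, hx, hadj⟩ := exists_exit p hv hz
  have hxs : x ∈ L.satSet (S : Set V) := by simpa [hW] using hx
  obtain ⟨g, hg, s, hs, rfl⟩ := hxs
  -- translate by g⁻¹
  have hadj' : Y.Adj (g⁻¹ • u) s := by
    have := (haut g (g⁻¹ • u) s).mp
    rw [smul_inv_smul] at this
    exact this hadj
  have hx'NB : g⁻¹ • u ∈ NB := ⟨s, hs, hadj'⟩
  have huW : u ∈ W := (hru : u ∈ compIn Y W v).mem_right
  have hWinv : ∀ (g' : H), g' ∈ L → (g' • ·) '' W = W := fun g' hg' => smul_satSet_compl hg' _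
  have hcompeq : (g⁻¹ • ·) '' (compIn Y W v) = compIn Y W (g⁻¹ • u) := by
    rw [← compIn_eq_of_mem (hru : u ∈ compIn Y W v)]
    rw [smul_compIn haut, hWinv g⁻¹ (inv_mem hg)]
  have hbdd' : L.bddSet (compIn Y W (g⁻¹ • u)) := by
    rw [← hcompeq]
    exact bddSet_smul (inv_mem hg) hbdd
  have hTx' := hTx (g⁻¹ • u) hbdd'
  -- now v ∈ g '' comp(g⁻¹u) ⊆ satSet (Tx _)
  have hvmem : v ∈ (g • ·) '' (compIn Y W (g⁻¹ • u)) := by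
    rw [← hcompeq]
    exact ⟨g⁻¹ • v, ⟨v, self_mem_compIn hv, rfl⟩, by simp⟩
  obtain ⟨y, hy, rfl⟩ := hvmem
  have : (g • y) ∈ L.satSet ((Tx (g⁻¹ • u) : Finset V) : Set V) :=
    smul_mem_satSet hg (hTx' hy)
  refine Subgroup.satSet_mono L ?_ this
  exact_mod_cast Finset.subset_biUnion_of_mem Tx (by simpa using hx'NB)

end Alpha



/-- The complement of the full `H`-saturation of a finite set. -/
abbrev Wof (H : Type) [Group H] [MulAction H V] (σ : Finset V) : Set V :=
  ((⊤ : Subgroup H).satSet (σ : Set V))ᶜ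

section Threads

variable (hconn : Y.Connected)
variable (hlf : ∀ v : V, (Y.neighborSet v).Finite)
variable (haut : ∀ (g : H) (u v : V), Y.Adj (g • u) (g • v) ↔ Y.Adj u v)

include hconn hlf in
lemma exists_exhaustion :
    ∃ E : ℕ → Finset V, (∀ m n, m ≤ n → E m ⊆ E n) ∧ (∀ v : V, ∃ n, v ∈ E n) := by
  classical
  obtain ⟨v₀⟩ := hconn.nonempty
  let A : ℕ → Set V := fun n => Nat.rec {v₀} (fun _ B => B ∪ {x | ∃ a ∈ B, Y.Adj a x}) n
  have hstep : ∀ n, A (n + 1) = A n ∪ {x | ∃ a ∈ A n, Y.Adj a x} := fun n => rfl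
  have hfin : ∀ n, (A n).Finite := by
    intro n
    induction n with
    | zero => exact Set.finite_singleton v₀
    | succ n ih =>
      rw [hstep]
      refine ih.union ?_
      have hsub : {x | ∃ a ∈ A n, Y.Adj a x} ⊆ ⋃ a ∈ A n, Y.neighborSet a := by
        rintro x ⟨a, ha, hadj⟩
        exact Set.mem_biUnion ha hadj
      exact (Set.Finite.biUnion ih fun a _ => hlf a).subset hsub
  have hmono : ∀ m n, m ≤ n → A m ⊆ A n := by
    intro m n h
    induction n, h using Nat.le_induction with
    | base => exact subset_rfl
    | succ n hn ih =>
      rw [hstep]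
      exact ih.trans Set.subset_union_left
  have hcov' : ∀ {u w : V} (p : Y.Walk u w) (n : ℕ), u ∈ A n → ∃ m, w ∈ A m := by
    intro u w p
    induction p with
    | nil => exact fun n h => ⟨n, h⟩
    | @cons u b w h q ih =>
      intro n hu
      exact ih (n + 1) (by rw [hstep]; exact Or.inr ⟨u, hu, h⟩)
  have hcov : ∀ v : V, ∃ n, v ∈ A n := by
    intro v
    obtain ⟨p⟩ := hconn.preconnected v₀ v
    exact hcov' p 0 rfl
  refine ⟨fun n => (hfin n).toFinset, ?_, ?_⟩
  · intro m n h
    rw [Set.Finite.toFinset_subset, Set.Finite.coe_toFinset]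
    exact hmono m n h
  · intro v
    obtain ⟨n, hn⟩ := hcov v
    exact ⟨n, (hfin n).mem_toFinset.mpr hn⟩

include hconn hlf haut in
lemma lemD {σ σ' : Finset V} (hσ' : σ'.Nonempty) (hsub : σ ⊆ σ') {w : V}
    (hw : w ∈ Wof H σ) (hub : ¬ (⊤ : Subgroup H).bddSet (compIn Y (Wof H σ) w)) :
    ∃ w', w' ∈ compIn Y (Wof H σ) w ∧ w' ∈ Wof H σ' ∧
      ¬ (⊤ : Subgroup H).bddSet (compIn Y (Wof H σ') w') := by
  classical
  by_contra hc
  push_neg at hc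
  obtain ⟨T, hT⟩ := bounded_comps_bounded hconn hlf haut ⊤ σ' hσ'
  apply hub
  refine ⟨σ' ∪ T, ?_⟩
  intro x hx
  rw [Finset.coe_union, satSet_union]
  by_cases hxσ' : x ∈ (⊤ : Subgroup H).satSet (σ' : Set V)
  · exact Or.inl hxσ'
  · exact Or.inr (hT x hxσ' (hc x hx hxσ'))

include hconn hlf haut in
/-- Every unbounded component extends to a filtered end anchored in it. -/
lemma exists_end {S : Finset V} (hSne : S.Nonempty) {v : V}
    (hv : v ∈ Wof H S)
    (hub : ¬ (⊤ : Subgroup H).bddSet (compIn Y (Wof H S) v)) :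
    ∃ (f : filteredEnds Y (⊤ : Subgroup H)) (x : V) (hx : x ∈ Wof H S),
      x ∈ compIn Y (Wof H S) v ∧
      f.1 S = (Y.induce (Wof H S)).connectedComponentMk ⟨x, hx⟩ := by
  classical
  obtain ⟨E, hEmono, hEcov⟩ := exists_exhaustion hconn hlf
  set σ : ℕ → Finset V := fun n => S ∪ E n with hσdef
  have hSσ : ∀ n, S ⊆ σ n := fun n => Finset.subset_union_left
  have hσne : ∀ n, (σ n).Nonempty := fun n => hSne.mono (hSσ n)
  have hσmono : ∀ m n, m ≤ n → σ m ⊆ σ n := fun m n h =>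
    Finset.union_subset_union subset_rfl (hEmono m n h)
  have hWmono : ∀ m n, m ≤ n → Wof H (σ n) ⊆ Wof H (σ m) := fun m n h =>
    Set.compl_subset_compl.mpr
      (Subgroup.satSet_mono _ (Finset.coe_subset.mpr (hσmono m n h)))
  have hWS : ∀ n, Wof H (σ n) ⊆ Wof H S := fun n =>
    Set.compl_subset_compl.mpr (Subgroup.satSet_mono _ (Finset.coe_subset.mpr (hSσ n)))
  let P : ℕ → V → Prop := fun n w =>
    w ∈ Wof H (σ n) ∧ ¬ (⊤ : Subgroup H).bddSet (compIn Y (Wof H (σ n)) w)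
  have hstep : ∀ n (w : V), P n w → ∃ w', w' ∈ compIn Y (Wof H (σ n)) w ∧ P (n + 1) w' := by
    intro n w hw
    obtain ⟨w', h1, h2, h3⟩ :=
      lemD hconn hlf haut (hσne (n + 1)) (hσmono n (n + 1) (Nat.le_succ n)) hw.1 hw.2
    exact ⟨w', h1, h2, h3⟩
  obtain ⟨w₀, hw₀c, hw₀⟩ : ∃ w₀, w₀ ∈ compIn Y (Wof H S) v ∧ P 0 w₀ := by
    obtain ⟨w', h1, h2, h3⟩ := lemD hconn hlf haut (hσne 0) (hSσ 0) hv hub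
    exact ⟨w', h1, h2, h3⟩
  choose nxt hnxt1 hnxt2 using hstep
  let G : (n : ℕ) → {w : V // P n w} :=
    fun n => Nat.rec ⟨w₀, hw₀⟩ (fun n p => ⟨nxt n p.1 p.2, hnxt2 n p.1 p.2⟩) n
  have hlink : ∀ n, (G (n + 1)).1 ∈ compIn Y (Wof H (σ n)) ((G n).1) := by
    intro n
    exact hnxt1 n (G n).1 (G n).2
  have hchain : ∀ m n, m ≤ n → (G n).1 ∈ compIn Y (Wof H (σ m)) ((G m).1) := by
    intro m n h
    induction n, h using Nat.le_induction with
    | base => exact self_mem_compIn (G m).2.1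
    | succ n hn ih =>
      have h1 : (G (n + 1)).1 ∈ compIn Y (Wof H (σ m)) ((G n).1) :=
        compIn_mono (hWmono m n hn) _ (hlink n)
      rw [compIn_eq_of_mem ih] at h1
      exact h1
  have hbase : ∀ n, (G n).1 ∈ compIn Y (Wof H S) v := by
    intro n
    have h1 : (G n).1 ∈ compIn Y (Wof H S) ((G 0).1) :=
      compIn_mono (hWS 0) _ (hchain 0 n (Nat.zero_le n))
    have h0 : (G 0).1 = w₀ := rfl
    rw [h0] at h1
    rwa [compIn_eq_of_mem hw₀c] at h1
  -- cofinality
  have hcof : ∀ τ : Finset V, ∃ n, τ ⊆ σ n := by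
    intro τ
    choose ix hix using hEcov
    refine ⟨τ.sup ix, fun x hx => ?_⟩
    exact Finset.mem_union_right _ (hEmono (ix x) (τ.sup ix) (Finset.le_sup hx) (hix x))
  choose N hN using hcof
  have hmem : ∀ (τ : Finset V) (m : ℕ), τ ⊆ σ m → (G m).1 ∈ Wof H τ := by
    intro τ m h
    exact Set.compl_subset_compl.mpr
      (Subgroup.satSet_mono _ (Finset.coe_subset.mpr h)) (G m).2.1
  have hkey : ∀ (τ : Finset V) (m n : ℕ) (hm : τ ⊆ σ m) (hn : τ ⊆ σ n),
      (Y.induce (Wof H τ)).connectedComponentMk ⟨(G m).1, hmem τ m hm⟩ =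
      (Y.induce (Wof H τ)).connectedComponentMk ⟨(G n).1, hmem τ n hn⟩ := by
    have main : ∀ (τ : Finset V) (m n : ℕ) (hm : τ ⊆ σ m) (hn : τ ⊆ σ n), m ≤ n →
        (Y.induce (Wof H τ)).connectedComponentMk ⟨(G m).1, hmem τ m hm⟩ =
        (Y.induce (Wof H τ)).connectedComponentMk ⟨(G n).1, hmem τ n hn⟩ := by
      intro τ m n hm hn h
      apply ConnectedComponent.sound
      have hr : reachIn Y (Wof H (σ m)) ((G m).1) ((G n).1) := hchain m n h
      have hr' : reachIn Y (Wof H τ) ((G m).1) ((G n).1) := by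
        refine hr.mono ?_
        exact Set.compl_subset_compl.mpr
          (Subgroup.satSet_mono _ (Finset.coe_subset.mpr hm))
      exact (reachIn_iff_induce_reachable _ _).mp hr'
    intro τ m n hm hn
    rcases le_total m n with h | h
    · exact main τ m n hm hn h
    · exact (main τ n m hn hm h).symm
  refine ⟨⟨fun τ => (Y.induce (Wof H τ)).connectedComponentMk ⟨(G (N τ)).1, hmem τ (N τ) (hN τ)⟩, ?_⟩,
      (G (N S)).1, hmem S (N S) (hN S), hbase (N S), rfl⟩
  intro τ τ' h
  rw [ConnectedComponent.map_mk]
  exact hkey τ (N τ') (N τ) (h.trans (hN τ')) (hN τ)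

include hconn hlf haut in
lemma finite_ucomps (hfin : Cardinal.mk (filteredEnds Y (⊤ : Subgroup H)) < Cardinal.aleph0)
    {S : Finset V} (hSne : S.Nonempty) :
    {C : Set V | (∃ w ∈ Wof H S, compIn Y (Wof H S) w = C) ∧
      ¬ (⊤ : Subgroup H).bddSet C}.Finite := by
  classical
  haveI : Finite (filteredEnds Y (⊤ : Subgroup H)) := Cardinal.mk_lt_aleph0_iff.mp hfin
  rw [← Set.finite_coe_iff]
  set U := {C : Set V | (∃ w ∈ Wof H S, compIn Y (Wof H S) w = C) ∧
      ¬ (⊤ : Subgroup H).bddSet C} with hU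
  have hmain : ∀ C : U, ∃ (f : filteredEnds Y (⊤ : Subgroup H)) (x : V)
      (hx : x ∈ Wof H S), x ∈ C.1 ∧
      f.1 S = (Y.induce (Wof H S)).connectedComponentMk ⟨x, hx⟩ := by
    rintro ⟨C, ⟨w, hwW, hwC⟩, hub⟩
    rw [← hwC] at hub
    obtain ⟨f, x, hx, hxc, hfS⟩ := exists_end hconn hlf haut hSne hwW hub
    exact ⟨f, x, hx, hwC ▸ hxc, hfS⟩
  choose φ xx hxW hxC hφ using hmain
  have hCeq : ∀ C : U, C.1 = compIn Y (Wof H S) (xx C) := by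
    rintro C
    obtain ⟨⟨w, hwW, hwC⟩, hub⟩ := C.2
    have := hxC C
    rw [← hwC] at this ⊢
    exact (compIn_eq_of_mem this).symm
  refine Finite.of_injective φ ?_
  intro C C' h
  have hmk : (Y.induce (Wof H S)).connectedComponentMk ⟨xx C, hxW C⟩ =
      (Y.induce (Wof H S)).connectedComponentMk ⟨xx C', hxW C'⟩ := by
    rw [← hφ C, ← hφ C', h]
  have hreach := ConnectedComponent.exact hmk
  have hr : reachIn Y (Wof H S) (xx C) (xx C') :=
    (reachIn_iff_induce_reachable (hxW C) (hxW C')).mpr hreach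
  have : compIn Y (Wof H S) (xx C) = compIn Y (Wof H S) (xx C') :=
    (compIn_eq_of_mem (hr : xx C' ∈ compIn Y (Wof H S) (xx C))).symm
  refine Subtype.ext ?_
  rw [hCeq C, hCeq C', this]

lemma exists_ucomp (hpos : Cardinal.mk (filteredEnds Y (⊤ : Subgroup H)) ≠ 0)
    (S : Finset V) :
    ∃ w ∈ Wof H S, ¬ (⊤ : Subgroup H).bddSet (compIn Y (Wof H S) w) := by
  classical
  obtain ⟨f⟩ := Cardinal.mk_ne_zero_iff.mp hpos
  obtain ⟨x, hxmk⟩ := (f.1 S).exists_rep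
  refine ⟨x.1, x.2, ?_⟩
  rintro ⟨T, hT⟩
  have hsub : S ⊆ S ∪ T := Finset.subset_union_left
  have hcomp := f.2 hsub
  obtain ⟨y, hymk'⟩ := (f.1 (S ∪ T)).exists_rep
  have hymk : (Y.induce (((⊤ : Subgroup H).satSet ((S ∪ T : Finset V) : Set V))ᶜ)).connectedComponentMk y
      = f.1 (S ∪ T) := hymk'
  have hxmk2 : (Y.induce (((⊤ : Subgroup H).satSet (S : Set V))ᶜ)).connectedComponentMk x
      = f.1 S := hxmk
  rw [← hymk, ConnectedComponent.map_mk] at hcomp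
  rw [← hxmk2] at hcomp
  have hreach := ConnectedComponent.exact hcomp
  have hyW : y.1 ∈ Wof H S := by
    have : Wof H (S ∪ T) ⊆ Wof H S :=
      Set.compl_subset_compl.mpr
        (Subgroup.satSet_mono _ (Finset.coe_subset.mpr hsub))
    exact this y.2
  have hr : reachIn Y (Wof H S) y.1 x.1 :=
    (reachIn_iff_induce_reachable hyW x.2).mpr hreach
  have hy : y.1 ∈ compIn Y (Wof H S) x.1 := hr.symm
  have hyT := hT hy
  exact y.2 (Subgroup.satSet_mono _ (Finset.coe_subset.mpr Finset.subset_union_right) hyT)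

lemma smul_inv_smul_image (g : H) (A : Set V) : (g • ·) '' ((g⁻¹ • ·) '' A) = A := by
  ext w
  simp [Set.mem_image]

variable (hfree : ∀ (g : H) (v : V), g • v = v → g = 1)

include hconn hlf haut hfree in
lemma step_exists (K : Subgroup H) (hK : Infinite (H ⧸ K))
    (hpos : Cardinal.mk (filteredEnds Y (⊤ : Subgroup H)) ≠ 0)
    (hfin : Cardinal.mk (filteredEnds Y (⊤ : Subgroup H)) < Cardinal.aleph0)
    (D : Finset V) (hD : D.Nonempty) :
    ∃ D' : Finset V, D ⊆ D' ∧
      ((K.satSet ((D' : Finset V) : Set V))ᶜ).Nonempty ∧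
      (Y.induce ((K.satSet ((D' : Finset V) : Set V))ᶜ)).Connected ∧
      ¬ K.bddSet ((K.satSet ((D' : Finset V) : Set V))ᶜ) := by
  classical
  set WH : Set V := Wof H D with hWHdef
  set WK : Set V := (K.satSet (D : Set V))ᶜ with hWKdef
  have hWHK : WH ⊆ WK := Set.compl_subset_compl.mpr (satSet_le_top K _)
  have hWKinv : ∀ {k : H}, k ∈ K → (k • ·) '' WK = WK := fun hk => smul_satSet_compl hk _
  set U := {C : Set V | (∃ w ∈ WH, compIn Y WH w = C) ∧ ¬ (⊤ : Subgroup H).bddSet C} with hUdef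
  have hUfin : U.Finite := finite_ucomps hconn hlf haut hfin hD
  have hUne : U.Nonempty := by
    obtain ⟨w, hw, hub⟩ := exists_ucomp hpos D
    exact ⟨compIn Y WH w, ⟨w, hw, rfl⟩, hub⟩
  obtain ⟨T, hT⟩ := bounded_comps_bounded hconn hlf haut ⊤ D hD
  obtain ⟨v₀⟩ := hconn.nonempty
  haveI : Nonempty V := ⟨v₀⟩
  have hptex : ∀ C ∈ U, ∃ x, x ∈ C := by
    rintro C ⟨⟨w, hw, rfl⟩, -⟩
    exact ⟨w, self_mem_compIn hw⟩
  choose! pt hpt using hptex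
  -- the finite connected core R
  set X : Set V := ((D : Set V) ∪ (T : Set V)) ∪ (pt '' U) with hXdef
  have hXfin : X.Finite :=
    ((D.finite_toSet.union T.finite_toSet).union (hUfin.image pt))
  have hwalk : ∀ x : V, ∃ _ : Y.Walk v₀ x, True :=
    fun x => ⟨Classical.choice (hconn.preconnected v₀ x), trivial⟩
  choose wk hwk using hwalk
  set R : Set V := ⋃ x ∈ X, {y | y ∈ (wk x).support} with hRdef
  have hRfin : R.Finite := Set.Finite.biUnion hXfin (fun x _ => (wk x).support.finite_toSet)
  have hXR : X ⊆ R := fun x hx =>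
    Set.mem_biUnion hx ((wk x).end_mem_support)
  have hsupR : ∀ x ∈ X, ∀ y ∈ (wk x).support, y ∈ R := by
    intro x hx y hy
    exact Set.mem_biUnion hx hy
  have hRconn : ∀ u ∈ R, reachIn Y R v₀ u := by
    intro u hu
    simp only [hRdef, Set.mem_iUnion, Set.mem_setOf_eq] at hu
    obtain ⟨x, hxX, hus⟩ := hu
    exact ⟨(wk x).takeUntil u hus, fun y hy =>
      hsupR x hxX y ((wk x).support_takeUntil_subset hus hy)⟩
  have hRreach : ∀ u ∈ R, ∀ u' ∈ R, reachIn Y R u u' := fun u hu u' hu' =>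
    (hRconn u hu).symm.trans (hRconn u' hu')
  -- the finite set of "bad" group elements
  set Φ : Set H := {g : H | ∃ r ∈ R, g • r ∈ (D : Set V)} with hΦdef
  have hΦfin : Φ.Finite := by
    have hsub : Φ ⊆ ⋃ r ∈ R, ⋃ s ∈ (D : Set V), {g : H | g • r = s} := by
      rintro g ⟨r, hr, hgr⟩
      exact Set.mem_biUnion hr (Set.mem_biUnion hgr rfl)
    refine (Set.Finite.biUnion hRfin fun r _ =>
      Set.Finite.biUnion D.finite_toSet fun s _ => ?_).subset hsub
    apply Set.Subsingleton.finite
    intro a ha b hb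
    have h1 : (b⁻¹ * a) • r = r := by
      rw [mul_smul, ha, ← hb]
      simp
    have := hfree _ _ h1
    have h2 : b * (b⁻¹ * a) = b * 1 := by rw [this]
    simpa [mul_assoc] using h2
  -- good elements move R inside WK
  have hgood : ∀ g : H, (∀ k ∈ K, ∀ φ ∈ Φ, k * φ ≠ g) → ∀ r ∈ R, g • r ∈ WK := by
    intro g hg r hr
    intro hmem
    obtain ⟨k, hk, s, hs, hks⟩ := hmem
    have hφ : (k⁻¹ * g) • r = s := by
      rw [mul_smul, ← hks]
      simp
    exact hg k hk (k⁻¹ * g) ⟨r, hr, hφ ▸ hs⟩ (by group)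
  have hstarex : ∃ h : H, ∀ k ∈ K, ∀ φ ∈ Φ, k * φ ≠ h := by
    by_contra hc
    push_neg at hc
    exact not_cover K hK hΦfin hc
  obtain ⟨hstar, hstarp⟩ := hstarex
  -- reachability between translated core points
  have hreachtr : ∀ g : H, (∀ k ∈ K, ∀ φ ∈ Φ, k * φ ≠ g) → ∀ r ∈ R, ∀ r' ∈ R,
      reachIn Y WK (g • r) (g • r') := by
    intro g hg r hr r' hr'
    have h0 := (hRreach r hr r' hr').smul haut g
    exact h0.mono (by rintro _ ⟨z, hz, rfl⟩; exact hgood g hg z hz)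
  -- U is stable under translation
  have hUtrans : ∀ g : H, ∀ C ∈ U, (g • ·) '' C ∈ U := by
    rintro g C ⟨⟨w, hw, rfl⟩, hub⟩
    have hWHinv : (g • ·) '' WH = WH := smul_satSet_compl (Subgroup.mem_top g) _
    constructor
    · refine ⟨g • w, ?_, ?_⟩
      · rw [← hWHinv]
        exact ⟨w, hw, rfl⟩
      · rw [smul_compIn haut g w, hWHinv]
    · intro hb
      apply hub
      have h8 := bddSet_smul (L := (⊤ : Subgroup H)) (Subgroup.mem_top g⁻¹) hb
      have h9 : ((g⁻¹ : H) • ·) '' ((g • ·) '' (compIn Y WH w)) = compIn Y WH w := by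
        have h10 := smul_inv_smul_image (V := V) g⁻¹ (compIn Y WH w)
        simpa using h10
      rwa [h9] at h8
  have hUsurj : ∀ g : H, ∀ C ∈ U, ∃ C' ∈ U, (g • ·) '' C' = C := by
    intro g C hC
    exact ⟨(g⁻¹ • ·) '' C, hUtrans g⁻¹ C hC, smul_inv_smul_image g C⟩
  obtain ⟨C₁, hC₁⟩ := hUne
  have hptR : ∀ C ∈ U, pt C ∈ R := fun C h =>
    hXR (Or.inr (Set.mem_image_of_mem pt h))
  set c₁ : V := hstar • pt C₁ with hc₁def
  have hc₁WK : c₁ ∈ WK := hgood hstar hstarp _ (hptR C₁ hC₁)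
  set Cs : Set V := compIn Y WK c₁ with hCsdef
  -- every unbounded component is inside Cs
  have hClaimU : ∀ C ∈ U, C ⊆ Cs := by
    intro C hC
    obtain ⟨C', hC', hCeq⟩ := hUsurj hstar C hC
    have h1 : hstar • pt C' ∈ C := hCeq ▸ ⟨pt C', hpt C' hC', rfl⟩
    have h2 : reachIn Y WK c₁ (hstar • pt C') :=
      hreachtr hstar hstarp _ (hptR C₁ hC₁) _ (hptR C' hC')
    obtain ⟨⟨w, hw, hCw⟩, -⟩ := hC
    intro x hx
    have hx' : reachIn Y WH w x := by rw [← hCw] at hx; exact hx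
    have h3 : reachIn Y WH w (hstar • pt C') := by rw [← hCw] at h1; exact h1
    exact h2.trans ((h3.symm.trans hx').mono hWHK)
  -- the junk set
  set FJ : Set V := Set.image2 (fun (g : H) (x : V) => g • x) Φ ((D : Set V) ∪ (T : Set V))
    with hFJdef
  have hFJfin : FJ.Finite := Set.Finite.image2 _ hΦfin (D.finite_toSet.union T.finite_toSet)
  -- covering claim
  have hcov : ∀ x, x ∈ WK → x ∉ K.satSet FJ → x ∈ Cs := by
    intro x hxWK hxJ
    have hdicho : ∀ g : H, ∀ y ∈ (D : Set V) ∪ (T : Set V), x = g • y → x ∈ Cs := by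
      intro g y hy hxg
      by_cases hgb : ∀ k ∈ K, ∀ φ ∈ Φ, k * φ ≠ g
      · have hyR : y ∈ R := by
          rcases hy with hy | hy
          · exact hXR (Or.inl (Or.inl hy))
          · exact hXR (Or.inl (Or.inr hy))
        have h4 : reachIn Y WK (g • y) (g • pt C₁) :=
          hreachtr g hgb _ hyR _ (hptR C₁ hC₁)
        have h5 : g • pt C₁ ∈ Cs :=
          hClaimU _ (hUtrans g C₁ hC₁) ⟨pt C₁, hpt C₁ hC₁, rfl⟩
        rw [hxg]
        exact (h5 : reachIn Y WK c₁ _).trans h4.symm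
      · push_neg at hgb
        obtain ⟨k, hk, φ, hφ, he⟩ := hgb
        exact absurd ⟨k, hk, φ • y, ⟨φ, hφ, y, hy, rfl⟩,
          by rw [← mul_smul, he, ← hxg]⟩ hxJ
    by_cases hxWH : x ∈ WH
    · by_cases hb : (⊤ : Subgroup H).bddSet (compIn Y WH x)
      · obtain ⟨g, -, t, ht, hgt⟩ := hT x hxWH hb
        exact hdicho g t (Or.inr ht) hgt.symm
      · exact hClaimU _ ⟨⟨x, hxWH, rfl⟩, hb⟩ (self_mem_compIn hxWH)
    · have hx' : x ∈ (⊤ : Subgroup H).satSet (D : Set V) := by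
        simpa [hWHdef] using hxWH
      obtain ⟨g, -, s, hs, hgs⟩ := hx'
      exact hdicho g s (Or.inl hs) hgs.symm
  -- K-invariance of Cs
  have hCsinv : ∀ k ∈ K, ∀ x ∈ Cs, k • x ∈ Cs := by
    intro k hk x hx
    have hkh : ∀ k' ∈ K, ∀ φ ∈ Φ, k' * φ ≠ k * hstar := by
      intro k' hk' φ hφ he
      refine hstarp (k⁻¹ * k') (mul_mem (inv_mem hk) hk') φ hφ ?_
      rw [mul_assoc, he, ← mul_assoc]
      simp
    have h5 : (k * hstar) • pt C₁ ∈ Cs := by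
      exact hClaimU _ (hUtrans (k * hstar) C₁ hC₁) ⟨pt C₁, hpt C₁ hC₁, rfl⟩
    have h6 := (hx : reachIn Y WK c₁ x).smul haut k
    rw [hWKinv hk] at h6
    have h7 : reachIn Y WK c₁ (k • c₁) := by
      have := h5
      rwa [mul_smul] at this
    exact h7.trans h6
  -- assembling the finite set D'
  set A : Set V := Csᶜ with hAdef
  have hAinv : ∀ k ∈ K, ∀ x ∈ A, k • x ∈ A := by
    intro k hk x hx hmem
    exact hx (by simpa using hCsinv k⁻¹ (inv_mem hk) _ hmem)
  have hGfin : ((D : Set V) ∪ FJ).Finite := D.finite_toSet.union hFJfin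
  have hA2 : A ⊆ K.satSet ((D : Set V) ∪ FJ) := by
    intro x hx
    rw [satSet_union]
    by_cases hxWK : x ∈ WK
    · right
      by_cases hxJ : x ∈ K.satSet FJ
      · exact hxJ
      · exact absurd (hcov x hxWK hxJ) hx
    · left
      simpa [hWKdef] using hxWK
  set D'set : Set V := ((D : Set V) ∪ FJ) ∩ A with hD'def
  have hD'fin : D'set.Finite := hGfin.inter_of_left A
  set D' : Finset V := hD'fin.toFinset with hD'fdef
  have hD'coe : (D' : Set V) = D'set := hD'fin.coe_toFinset
  have hsatD' : K.satSet (D' : Set V) = A := by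
    rw [hD'coe]
    apply Set.Subset.antisymm
    · rintro _ ⟨k, hk, d, ⟨hd1, hd2⟩, rfl⟩
      exact hAinv k hk d hd2
    · intro x hx
      obtain ⟨k, hk, g, hg, rfl⟩ := hA2 hx
      have hgA : g ∈ A := by
        have := hAinv k⁻¹ (inv_mem hk) _ hx
        simpa using this
      exact ⟨k, hk, g, ⟨hg, hgA⟩, rfl⟩
  have hsatD'c : (K.satSet (D' : Set V))ᶜ = Cs := by
    rw [hsatD', hAdef, compl_compl]
  refine ⟨D', ?_, ?_, ?_, ?_⟩
  · intro d hd
    rw [← Finset.mem_coe, hD'coe]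
    refine ⟨Or.inl (by exact_mod_cast hd), ?_⟩
    intro hmem
    exact (compIn_subset hmem : _ ∈ WK) (subset_satSet K _ (by exact_mod_cast hd))
  · rw [hsatD'c]
    exact ⟨c₁, self_mem_compIn hc₁WK⟩
  · rw [hsatD'c]
    exact connected_compIn hc₁WK
  · exact not_bdd_compl hfree hK v₀ D'

end Threads

end EndsAux

/-- If `K ≤ H` has infinite index and `e(Y,H)` is finite and nonzero, then there is an
increasing sequence of finite sets `Dₙ` with `⋃ₙ K•Dₙ = V` such that each complement
`V ∖ K•Dₙ` is a single nonempty connected `K`-unbounded piece. -/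
theorem stmt13 {V H : Type} [Group H] [MulAction H V] (Y : SimpleGraph V)
    (hconn : Y.Connected)
    (hlf : ∀ v : V, (Y.neighborSet v).Finite)
    (hfree : ∀ (g : H) (v : V), g • v = v → g = 1)
    (haut : ∀ (g : H) (u v : V), Y.Adj (g • u) (g • v) ↔ Y.Adj u v)
    (K : Subgroup H) (hK : Infinite (H ⧸ K))
    (hpos : Cardinal.mk (filteredEnds Y (⊤ : Subgroup H)) ≠ 0)
    (hfin : Cardinal.mk (filteredEnds Y (⊤ : Subgroup H)) < Cardinal.aleph0) :
    ∃ D : ℕ → Finset V,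
      (∀ n, D n ⊆ D (n + 1)) ∧
      (⋃ n, K.satSet ((D n : Finset V) : Set V)) = Set.univ ∧
      ∀ n,
        ((K.satSet ((D n : Finset V) : Set V))ᶜ).Nonempty ∧
        (Y.induce ((K.satSet ((D n : Finset V) : Set V))ᶜ)).Connected ∧
        ¬ K.bddSet ((K.satSet ((D n : Finset V) : Set V))ᶜ) := by
  classical
  obtain ⟨E, hEmono, hEcov⟩ := EndsAux.exists_exhaustion hconn hlf
  obtain ⟨v₀⟩ := hconn.nonempty
  have hstep : ∀ Dn : Finset V, ∃ D' : Finset V, (Dn ∪ {v₀}) ⊆ D' ∧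
      ((K.satSet ((D' : Finset V) : Set V))ᶜ).Nonempty ∧
      (Y.induce ((K.satSet ((D' : Finset V) : Set V))ᶜ)).Connected ∧
      ¬ K.bddSet ((K.satSet ((D' : Finset V) : Set V))ᶜ) := by
    intro Dn
    exact EndsAux.step_exists hconn hlf haut hfree K hK hpos hfin (Dn ∪ {v₀})
      ⟨v₀, by simp⟩
  choose stp hstp1 hstp2 hstp3 hstp4 using hstep
  set D : ℕ → Finset V :=
    fun n => Nat.rec (stp (E 0)) (fun n Dn => stp (Dn ∪ E (n + 1))) n with hDdef
  have hDs : ∀ n, D (n + 1) = stp (D n ∪ E (n + 1)) := fun n => rfl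
  refine ⟨D, ?_, ?_, ?_⟩
  · intro n
    rw [hDs]
    intro d hd
    exact hstp1 _ (Finset.mem_union_left _ (Finset.mem_union_left _ hd))
  · apply Set.eq_univ_of_forall
    intro v
    obtain ⟨n, hn⟩ := hEcov v
    have hv : v ∈ D n := by
      cases n with
      | zero => exact hstp1 _ (Finset.mem_union_left _ hn)
      | succ m =>
        rw [hDs]
        exact hstp1 _ (Finset.mem_union_left _ (Finset.mem_union_right _ hn))
    exact Set.mem_iUnion.mpr ⟨n, EndsAux.subset_satSet K _ (by exact_mod_cast hv)⟩
  · intro n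
    cases n with
    | zero => exact ⟨hstp2 _, hstp3 _, hstp4 _⟩
    | succ m => exact ⟨hstp2 _, hstp3 _, hstp4 _⟩
end

section
/- Let G be a group generated by a finite set S₀ and let H ≤ G be a subgroup. Then the number of filtered ends e(G,H) equals 0 if and only if the index [G:H] is finite. -/
open SimpleGraph

/-! ### Auxiliary material: König's lemma for injective rays -/

section Konig
variable {V : Type} [DecidableEq V] (Q : SimpleGraph V)

/-- Vertices reachable from `v` by a walk avoiding `K`. -/
def Rset (K : Finset V) (v : V) : Set V :=
  {u | ∃ p : Q.Walk v u, ∀ x ∈ p.support, x ∉ K}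

lemma Rset_step {K : Finset V} {v : V} (hfin : (Q.neighborSet v).Finite)
    (hinf : (Rset Q K v).Infinite) :
    ∃ w, Q.Adj v w ∧ w ∉ K ∧ (Rset Q (insert v K) w).Infinite := by
  by_contra hcon
  push_neg at hcon
  have hsub : Rset Q K v ⊆ {v} ∪ ⋃ w ∈ {w | Q.Adj v w ∧ w ∉ K}, Rset Q (insert v K) w := by
    rintro u ⟨p, hp⟩
    by_cases huv : u = v
    · exact Or.inl (by simp [huv])
    refine Or.inr ?_
    have hq : ∀ x ∈ p.toPath.1.support, x ∉ K := fun x hx =>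
      hp x (Walk.support_toPath_subset p hx)
    have hpath : (p.toPath.1).IsPath := p.toPath.2
    cases hq2 : p.toPath.1 with
    | nil => exact absurd rfl huv
    | @cons _ w _ hadj q =>
      rw [hq2] at hq hpath
      have hnodup := hpath.support_nodup
      rw [Walk.support_cons, List.nodup_cons] at hnodup
      have hwK : ∀ x ∈ q.support, x ∉ insert v K := by
        intro x hx
        simp only [Finset.mem_insert, not_or]
        exact ⟨fun h => hnodup.1 (h ▸ hx), hq x (by simp [Walk.support_cons, hx])⟩
      have hwmem : w ∉ K := hq w (by simp [Walk.support_cons, q.start_mem_support])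
      exact Set.mem_biUnion (show w ∈ {w | Q.Adj v w ∧ w ∉ K} from ⟨hadj, hwmem⟩) ⟨q, hwK⟩
  refine hinf (Set.Finite.subset ?_ hsub)
  refine (Set.finite_singleton v).union ?_
  refine Set.Finite.biUnion (Set.Finite.subset hfin (fun w hw => hw.1)) ?_
  intro w hw
  exact hcon w hw.1 hw.2

variable {Q}

/-- States for the greedy construction of an injective ray. -/
def GoodPair (Q : SimpleGraph V) : Type _ :=
  {p : V × Finset V // p.1 ∉ p.2 ∧ (Rset Q p.2 p.1).Infinite}

noncomputable def rayStep (hfin : ∀ v, (Q.neighborSet v).Finite) (s : GoodPair Q) : GoodPair Q :=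
  ⟨((Rset_step Q (hfin s.1.1) s.2.2).choose, insert s.1.1 s.1.2),
    by
      have h := (Rset_step Q (hfin s.1.1) s.2.2).choose_spec
      refine ⟨?_, h.2.2⟩
      simp only [Finset.mem_insert, not_or]
      exact ⟨h.1.ne', h.2.1⟩⟩

lemma rayStep_adj (hfin : ∀ v, (Q.neighborSet v).Finite) (s : GoodPair Q) :
    Q.Adj s.1.1 (rayStep hfin s).1.1 :=
  (Rset_step Q (hfin s.1.1) s.2.2).choose_spec.1

lemma rayStep_snd (hfin : ∀ v, (Q.neighborSet v).Finite) (s : GoodPair Q) :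
    (rayStep hfin s).1.2 = insert s.1.1 s.1.2 := rfl

/-- König's lemma: an infinite connected locally finite graph contains an injective ray. -/
lemma exists_injective_ray [Infinite V] (hconn : ∀ u v : V, Q.Reachable u v)
    (hfin : ∀ v, (Q.neighborSet v).Finite) :
    ∃ r : ℕ → V, (∀ n, Q.Adj (r n) (r (n + 1))) ∧ Function.Injective r := by
  have v₀ : V := Classical.arbitrary V
  have hinit : (Rset Q ∅ v₀).Infinite := by
    refine Set.infinite_univ.mono ?_
    intro u _
    exact ⟨(hconn v₀ u).some, by simp⟩
  let s₀ : GoodPair Q := ⟨(v₀, ∅), by simp, hinit⟩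
  let seq : ℕ → GoodPair Q := fun n => (rayStep hfin)^[n] s₀
  have hseq : ∀ n, seq (n + 1) = rayStep hfin (seq n) := fun n =>
    Function.iterate_succ_apply' _ n s₀
  refine ⟨fun n => (seq n).1.1, fun n => ?_, ?_⟩
  · show Q.Adj (seq n).1.1 (seq (n + 1)).1.1
    rw [hseq n]; exact rayStep_adj hfin (seq n)
  · have hmem : ∀ m n, m < n → (seq m).1.1 ∈ (seq n).1.2 := by
      intro m n hmn
      induction n with
      | zero => omega
      | succ k ih =>
        rw [hseq k, rayStep_snd]
        rcases Nat.lt_succ_iff_lt_or_eq.mp hmn with h | h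
        · exact Finset.mem_insert_of_mem (ih h)
        · subst h; exact Finset.mem_insert_self _ _
    intro m n hEq
    replace hEq : (seq m).1.1 = (seq n).1.1 := hEq
    by_contra hne
    rcases Nat.lt_or_ge m n with h | h
    · exact (seq n).2.1 (hEq ▸ hmem m n h)
    · exact (seq m).2.1 (hEq ▸ hmem n m (by omega))
end Konig

/-! ### Auxiliary material: the Cayley graph, projections and the Schreier graph -/

section Cayley
variable {G : Type} [Group G] (S₀ : Finset G) (H : Subgroup G)

lemma cayley_adj_mul (g : G) {x y : G} (h : (cayleyGraph G S₀).Adj x y) :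
    (cayleyGraph G S₀).Adj (g * x) (g * y) := by
  obtain ⟨hne, hs⟩ := h
  refine ⟨by simpa using hne, ?_⟩
  have h1 : (g * x)⁻¹ * (g * y) = x⁻¹ * y := by group
  have h2 : (g * y)⁻¹ * (g * x) = y⁻¹ * x := by group
  rw [h1, h2]; exact hs

/-- Left translation as a graph homomorphism of the Cayley graph. -/
def cayleyMulHom (g : G) : cayleyGraph G S₀ →g cayleyGraph G S₀ where
  toFun x := g * x
  map_rel' := fun h => cayley_adj_mul S₀ g h

lemma cayley_reachable_mul (g : G) {x y : G} (h : (cayleyGraph G S₀).Reachable x y) :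
    (cayleyGraph G S₀).Reachable (g * x) (g * y) :=
  h.map (cayleyMulHom S₀ g)

lemma cayley_reachable_one (hgen : Subgroup.closure (S₀ : Set G) = ⊤) (g : G) :
    (cayleyGraph G S₀).Reachable 1 g := by
  have hg : g ∈ Subgroup.closure (S₀ : Set G) := hgen ▸ Subgroup.mem_top g
  induction hg using Subgroup.closure_induction with
  | mem x hx =>
    by_cases h1 : (1 : G) = x
    · exact h1 ▸ Reachable.refl 1
    · exact (Adj.reachable ⟨h1, Or.inl (by simpa using hx)⟩)
  | one => exact Reachable.refl 1
  | mul x y hx hy ihx ihy =>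
    exact ihx.trans (by simpa using cayley_reachable_mul S₀ x ihy)
  | inv x hx ihx =>
    have := cayley_reachable_mul S₀ x⁻¹ ihx
    simpa using this.symm

lemma cayley_reachable (hgen : Subgroup.closure (S₀ : Set G) = ⊤) (x y : G) :
    (cayleyGraph G S₀).Reachable x y :=
  (cayley_reachable_one S₀ hgen x).symm.trans (cayley_reachable_one S₀ hgen y)

/-- The projection `G → G ⧸ H` sending `g` to the class of `g⁻¹`; its fibers are the
right cosets `H g`. -/
def prj (g : G) : G ⧸ H := QuotientGroup.mk g⁻¹

lemma prj_mul_mem {h : G} (hh : h ∈ H) (g : G) : prj H (h * g) = prj H g := by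
  refine QuotientGroup.eq.mpr ?_
  have : (h * g)⁻¹⁻¹ * g⁻¹ = h := by group
  rw [this]; exact hh

lemma prj_eq_iff {a b : G} : prj H a = prj H b ↔ ∃ h ∈ H, h * b = a := by
  rw [prj, prj, QuotientGroup.eq]
  constructor
  · intro hmem
    refine ⟨a * b⁻¹, by simpa [mul_assoc] using hmem, by group⟩
  · rintro ⟨h, hh, rfl⟩
    have : (h * b)⁻¹⁻¹ * b⁻¹ = h := by group
    rw [this]; exact hh

lemma prj_surjective : Function.Surjective (prj H) := fun q =>
  ⟨(Quotient.out q)⁻¹, by simp [prj, QuotientGroup.out_eq']⟩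

lemma mem_satSet_iff (S : Set G) (v : G) :
    v ∈ H.satSet S ↔ ∃ s ∈ S, prj H v = prj H s := by
  constructor
  · rintro ⟨g, hg, s, hs, rfl⟩
    exact ⟨s, hs, by rw [smul_eq_mul, prj_mul_mem H hg]⟩
  · rintro ⟨s, hs, heq⟩
    obtain ⟨h, hh, hmul⟩ := (prj_eq_iff H).mp heq
    exact ⟨h, hh, s, hs, hmul⟩

/-- The Schreier coset graph. -/
def schreier : SimpleGraph (G ⧸ H) where
  Adj q q' := q ≠ q' ∧ ∃ x y : G, prj H x = q ∧ prj H y = q' ∧ (cayleyGraph G S₀).Adj x y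
  symm := by
    constructor
    rintro q q' ⟨hne, x, y, hx, hy, hadj⟩
    exact ⟨hne.symm, y, x, hy, hx, hadj.symm⟩
  loopless := ⟨fun q h => h.1 rfl⟩

lemma schreier_reachable_of_cayley {x y : G} (h : (cayleyGraph G S₀).Reachable x y) :
    (schreier S₀ H).Reachable (prj H x) (prj H y) := by
  obtain ⟨w⟩ := h
  induction w with
  | nil => exact Reachable.refl _
  | cons hadj p ih =>
    refine Reachable.trans ?_ ih
    rename_i u v _
    by_cases he : prj H u = prj H v
    · exact he ▸ Reachable.refl _
    · exact Adj.reachable ⟨he, u, v, rfl, rfl, hadj⟩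

lemma schreier_neighborSet_finite (q : G ⧸ H) :
    ((schreier S₀ H).neighborSet q).Finite := by
  have hT : ((↑S₀ ∪ (fun a => a⁻¹) '' ↑S₀ : Set G)).Finite :=
    S₀.finite_toSet.union (S₀.finite_toSet.image _)
  refine (hT.image (fun t => QuotientGroup.mk (t⁻¹ * Quotient.out q) : G → G ⧸ H)).subset ?_
  rintro q' ⟨hne, x, y, hx, hy, hne2, hor⟩
  have hx' : ∃ t ∈ (↑S₀ ∪ (fun a => a⁻¹) '' ↑S₀ : Set G), y = x * t := by
    rcases hor with h | h
    · exact ⟨x⁻¹ * y, Or.inl h, by group⟩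
    · exact ⟨(y⁻¹ * x)⁻¹, Or.inr ⟨y⁻¹ * x, h, rfl⟩, by group⟩
  obtain ⟨t, ht, rfl⟩ := hx'
  refine ⟨t, ht, ?_⟩
  rw [← hy]
  show QuotientGroup.mk (t⁻¹ * Quotient.out q) = QuotientGroup.mk (x * t)⁻¹
  refine QuotientGroup.eq.mpr ?_
  have hxq : x * Quotient.out q ∈ H := by
    have : (QuotientGroup.mk x⁻¹ : G ⧸ H) = QuotientGroup.mk (Quotient.out q) := by
      rw [QuotientGroup.out_eq']; exact hx
    simpa using QuotientGroup.eq.mp this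
  have : (t⁻¹ * Quotient.out q)⁻¹ * (x * t)⁻¹ = (x * Quotient.out q)⁻¹ := by group
  rw [this]; exact inv_mem hxq

lemma lift_step {q q' : G ⧸ H} (hadj : (schreier S₀ H).Adj q q') {g : G} (hg : prj H g = q) :
    ∃ g' : G, prj H g' = q' ∧ (cayleyGraph G S₀).Adj g g' := by
  obtain ⟨hne, x, y, hx, hy, hxy⟩ := hadj
  have : prj H g = prj H x := by rw [hg, hx]
  obtain ⟨h, hh, rfl⟩ := (prj_eq_iff H).mp this
  exact ⟨h * y, by rw [prj_mul_mem H hh, hy], cayley_adj_mul S₀ h hxy⟩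

variable {r : ℕ → G ⧸ H}

noncomputable def liftRay (hadj : ∀ n, (schreier S₀ H).Adj (r n) (r (n + 1)))
    (g₀ : G) (hg₀ : prj H g₀ = r 0) : ∀ n : ℕ, {g : G // prj H g = r n}
  | 0 => ⟨g₀, hg₀⟩
  | n + 1 =>
    ⟨(lift_step S₀ H (hadj n) (liftRay hadj g₀ hg₀ n).2).choose,
      (lift_step S₀ H (hadj n) (liftRay hadj g₀ hg₀ n).2).choose_spec.1⟩

lemma liftRay_adj (hadj : ∀ n, (schreier S₀ H).Adj (r n) (r (n + 1)))
    (g₀ : G) (hg₀ : prj H g₀ = r 0) (n : ℕ) :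
    (cayleyGraph G S₀).Adj (liftRay S₀ H hadj g₀ hg₀ n).1
      (liftRay S₀ H hadj g₀ hg₀ (n + 1)).1 :=
  (lift_step S₀ H (hadj n) (liftRay S₀ H hadj g₀ hg₀ n).2).choose_spec.2
end Cayley

section Segment
variable {V : Type} (Y : SimpleGraph V) (W : Set V)

lemma reach_segment (x : ℕ → V) (hadj : ∀ n, Y.Adj (x n) (x (n + 1))) {a b : ℕ} (hab : a ≤ b)
    (hout : ∀ m, a ≤ m → m ≤ b → x m ∈ W) :
    (Y.induce W).Reachable ⟨x a, hout a le_rfl hab⟩ ⟨x b, hout b hab le_rfl⟩ := by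
  revert hout
  induction b, hab using Nat.le_induction with
  | base => intro hout; rfl
  | succ n hn ih =>
    intro hout
    have hout' : ∀ m, a ≤ m → m ≤ n → x m ∈ W := fun m h1 h2 => hout m h1 (by omega)
    refine (ih hout').trans (Adj.reachable ?_)
    show (Y.induce W).Adj ⟨x n, hout n hn (by omega)⟩ ⟨x (n + 1), hout (n + 1) (by omega) le_rfl⟩
    exact hadj n
end Segment

/-- For a finitely generated group `G` and a subgroup `H ≤ G`, the number of filtered ends
`e(G,H)` is zero if and only if `H` has finite index in `G`. -/
theorem stmt14 {G : Type} [Group G] (S₀ : Finset G)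
    (hgen : Subgroup.closure (S₀ : Set G) = ⊤)
    (H : Subgroup G) :
    Cardinal.mk (filteredEnds (cayleyGraph G S₀) H) = 0 ↔ Finite (G ⧸ H) := by
  rw [Cardinal.mk_eq_zero_iff]
  constructor
  · intro hempty
    by_contra hinf
    rw [not_finite_iff_infinite] at hinf
    haveI := Classical.decEq (G ⧸ H)
    -- an injective ray in the Schreier graph
    obtain ⟨r, hradj, hrinj⟩ := exists_injective_ray (Q := schreier S₀ H)
      (fun q q' => by
        obtain ⟨x, rfl⟩ := prj_surjective H q
        obtain ⟨y, rfl⟩ := prj_surjective H q'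
        exact schreier_reachable_of_cayley S₀ H (cayley_reachable S₀ hgen x y))
      (schreier_neighborSet_finite S₀ H)
    obtain ⟨g₀, hg₀⟩ := prj_surjective H (r 0)
    -- the lifted ray in the Cayley graph
    set x : ℕ → G := fun n => (liftRay S₀ H hradj g₀ hg₀ n).1 with hxdef
    have hxprj : ∀ n, prj H (x n) = r n := fun n => (liftRay S₀ H hradj g₀ hg₀ n).2
    have hxadj : ∀ n, (cayleyGraph G S₀).Adj (x n) (x (n + 1)) :=
      fun n => liftRay_adj S₀ H hradj g₀ hg₀ n
    -- the ray eventually escapes every saturated set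
    have hesc : ∀ S : Finset G, ∃ N, ∀ m, N ≤ m → x m ∉ H.satSet (S : Set G) := by
      intro S
      have hsubset : {n | x n ∈ H.satSet (S : Set G)} ⊆ r ⁻¹' (prj H '' ↑S) := by
        intro n hn
        obtain ⟨s, hs, he⟩ := (mem_satSet_iff H (S : Set G) (x n)).mp hn
        exact ⟨s, hs, by rw [← he, hxprj n]⟩
      have hfin2 : {n | x n ∈ H.satSet (S : Set G)}.Finite :=
        (Set.Finite.preimage hrinj.injOn (S.finite_toSet.image _)).subset hsubset
      obtain ⟨N, hN⟩ := hfin2.bddAbove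
      exact ⟨N + 1, fun m hm hmem => by have := hN hmem; omega⟩
    -- assemble an element of the filtered ends
    refine hempty.false ⟨fun S => ((cayleyGraph G S₀).induce ((H.satSet (S : Set G))ᶜ)).connectedComponentMk
      ⟨x ((hesc S).choose), (hesc S).choose_spec _ le_rfl⟩, ?_⟩
    intro S S' hSS
    rw [ConnectedComponent.map_mk]
    refine ConnectedComponent.eq.mpr ?_
    set N := (hesc S).choose with hNdef
    set N' := (hesc S').choose with hN'def
    have hspecS := (hesc S).choose_spec
    have hspecS' := (hesc S').choose_spec
    have hmono : H.satSet (S : Set G) ⊆ H.satSet (S' : Set G) :=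
      H.satSet_mono (Finset.coe_subset.mpr hSS)
    have reach1 : ((cayleyGraph G S₀).induce ((H.satSet (S : Set G))ᶜ)).Reachable
        ⟨x N, hspecS N le_rfl⟩ ⟨x (max N N'), hspecS _ (le_max_left _ _)⟩ := by
      have h := reach_segment (cayleyGraph G S₀) ((H.satSet (S : Set G))ᶜ) x hxadj
        (le_max_left N N') (fun m h1 _ => hspecS m h1)
      exact h
    have reach2 : ((cayleyGraph G S₀).induce ((H.satSet (S : Set G))ᶜ)).Reachable
        ⟨x N', fun hmem => hspecS' N' le_rfl (hmono hmem)⟩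
        ⟨x (max N N'), hspecS _ (le_max_left _ _)⟩ := by
      have h := reach_segment (cayleyGraph G S₀) ((H.satSet (S : Set G))ᶜ) x hxadj
        (le_max_right N N')
        (fun m h1 _ => fun hmem => hspecS' m h1 (hmono hmem))
      exact h
    exact reach2.trans reach1.symm
  · intro hfin
    haveI := hfin
    haveI := Fintype.ofFinite (G ⧸ H)
    haveI := Classical.decEq G
    set S : Finset G := Finset.univ.image (fun q : G ⧸ H => (Quotient.out q)⁻¹) with hSdef
    have hsat : H.satSet (S : Set G) = Set.univ := by
      ext g
      simp only [Set.mem_univ, iff_true]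
      rw [mem_satSet_iff]
      refine ⟨(Quotient.out (prj H g))⁻¹, by simp [hSdef], ?_⟩
      show prj H g = QuotientGroup.mk ((Quotient.out (prj H g))⁻¹)⁻¹
      rw [inv_inv, QuotientGroup.out_eq']
    constructor
    intro f
    obtain ⟨v, -⟩ := (f.1 S).exists_rep
    exact v.2 (hsat.ge (Set.mem_univ _))
end
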